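/- arXiv:2404.17192 — 13 statements merged into one kernel-verified Lean document; each statement's English description precedes it below -/
import Mathlib

section
/- Under the stated assumptions, the relaxation step preserves the box of admissible densities: for every ρ = (ρ_1,…,ρ_M) with ρ_j ∈ [0,R_j] for all j, one has T_j(ρ) ∈ [0,R_j] for every j = 1,…,M. (Discrete core of Lemma 2.3: the domain ∏_{j=1}^M [0,R_j] is invariant for the lane-exchange relaxation step of the multi-lane model.) -/
/-!
Each interface flux `S_j(u, w)` is monotone in `u` and antitone in `w` with slopes at most `𝒮`.
Comparing with the corner `(0, 0)` and with the corner `(R_j, R_{j+1})`, where `S_j` vanishes,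
gives `-𝒮 w ≤ S_j(u, w) ≤ 𝒮 u` and `-𝒮 (R_j - u) ≤ S_j(u, w) ≤ 𝒮 (R_{j+1} - w)`: a lane can never
lose more than `𝒮` times its density, nor gain more than `𝒮` times its free space, through one
interface. With two interfaces per lane and `λ = Δt / τ`, `ρ_j + λ g_j(ρ)` lies between
`(1 - 2𝒮λ) ρ_j ≥ 0` and `ρ_j + 2𝒮λ (R_j - ρ_j) ≤ R_j` as soon as `2𝒮λ ≤ 1`.
-/

open Set

theorem sub_mem_Icc_of_deriv_mem_Icc {f : ℝ → ℝ} {p q a b : ℝ}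
    (hf : DifferentiableOn ℝ f (Icc p q)) (hpq : p ≤ q)
    (hf' : ∀ x ∈ Ioo p q, deriv f x ∈ Icc a b) :
    f q - f p ∈ Icc (a * (q - p)) (b * (q - p)) := by
  have hp : p ∈ Icc p q := left_mem_Icc.2 hpq
  have hq : q ∈ Icc p q := right_mem_Icc.2 hpq
  rw [← interior_Icc] at hf'
  have hf_int : DifferentiableOn ℝ f (interior (Icc p q)) := hf.mono interior_subset
  exact ⟨(convex_Icc p q).mul_sub_le_image_sub_of_le_deriv hf.continuousOn hf_int
      (fun x hx => (hf' x hx).1) p hp q hq hpq,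
    (convex_Icc p q).image_sub_le_mul_sub_of_deriv_le hf.continuousOn hf_int
      (fun x hx => (hf' x hx).2) p hp q hq hpq⟩

def HasBoundedMonotoneSlopes (S : ℝ → ℝ → ℝ) (𝒮 R R' : ℝ) : Prop :=
  Differentiable ℝ (Function.uncurry S) ∧
  (∀ u ∈ Icc 0 R, ∀ w ∈ Icc 0 R', deriv (fun u' => S u' w) u ∈ Icc 0 𝒮) ∧
  (∀ u ∈ Icc 0 R, ∀ w ∈ Icc 0 R', deriv (fun w' => S u w') w ∈ Icc (-𝒮) 0)

def FluxBound (S : ℝ → ℝ → ℝ) (𝒮 R R' : ℝ) : Prop :=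
  ∀ u ∈ Icc 0 R, ∀ w ∈ Icc 0 R',
    S u w ∈ Icc (-(𝒮 * w)) (𝒮 * (R' - w)) ∧ S u w ∈ Icc (-(𝒮 * (R - u))) (𝒮 * u)

namespace HasBoundedMonotoneSlopes

variable {S : ℝ → ℝ → ℝ} {𝒮 R R' u₀ u w₀ w : ℝ}

theorem sub_left_mem_Icc (hS : HasBoundedMonotoneSlopes S 𝒮 R R') (hu₀ : 0 ≤ u₀)
    (hu₀u : u₀ ≤ u) (hu : u ≤ R) (hw : w ∈ Icc 0 R') :
    S u w - S u₀ w ∈ Icc 0 (𝒮 * (u - u₀)) := by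
  have hSw : Differentiable ℝ (fun u' => S u' w) :=
    hS.1.comp (differentiable_id.prodMk (differentiable_const w))
  simpa using sub_mem_Icc_of_deriv_mem_Icc hSw.differentiableOn hu₀u
    fun x hx => hS.2.1 x ⟨hu₀.trans hx.1.le, hx.2.le.trans hu⟩ w hw

theorem sub_right_mem_Icc (hS : HasBoundedMonotoneSlopes S 𝒮 R R') (hu : u ∈ Icc 0 R)
    (hw₀ : 0 ≤ w₀) (hw₀w : w₀ ≤ w) (hw : w ≤ R') :
    S u w - S u w₀ ∈ Icc (-(𝒮 * (w - w₀))) 0 := by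
  have hSu : Differentiable ℝ (fun w' => S u w') :=
    hS.1.comp ((differentiable_const u).prodMk differentiable_id)
  simpa using sub_mem_Icc_of_deriv_mem_Icc hSu.differentiableOn hw₀w
    fun x hx => hS.2.2 u hu x ⟨hw₀.trans hx.1.le, hx.2.le.trans hw⟩

theorem mem_Icc_of_map_zero_zero (hS : HasBoundedMonotoneSlopes S 𝒮 R R') (h₀ : S 0 0 = 0)
    (hu : u ∈ Icc 0 R) (hw : w ∈ Icc 0 R') :
    S u w ∈ Icc (-(𝒮 * w)) (𝒮 * u) := by
  have hR : (0 : ℝ) ≤ R := hu.1.trans hu.2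
  have hleft := hS.sub_left_mem_Icc le_rfl hu.1 hu.2 hw
  have hright := hS.sub_right_mem_Icc ⟨le_rfl, hR⟩ le_rfl hw.1 hw.2
  simp only [mem_Icc, sub_zero, h₀] at hleft hright ⊢
  constructor <;> linarith

theorem mem_Icc_of_map_max_max (hS : HasBoundedMonotoneSlopes S 𝒮 R R') (hmax : S R R' = 0)
    (hu : u ∈ Icc 0 R) (hw : w ∈ Icc 0 R') :
    S u w ∈ Icc (-(𝒮 * (R - u))) (𝒮 * (R' - w)) := by
  have hR : (0 : ℝ) ≤ R := hu.1.trans hu.2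
  have hleft := hS.sub_left_mem_Icc hu.1 hu.2 le_rfl hw
  have hright := hS.sub_right_mem_Icc ⟨hR, le_rfl⟩ hw.1 hw.2 le_rfl
  simp only [mem_Icc, hmax] at hleft hright ⊢
  constructor <;> linarith

theorem fluxBound (hS : HasBoundedMonotoneSlopes S 𝒮 R R') (h₀ : S 0 0 = 0)
    (hmax : S R R' = 0) : FluxBound S 𝒮 R R' := fun _ hu _ hw =>
  have h₀' := hS.mem_Icc_of_map_zero_zero h₀ hu hw
  have hmax' := hS.mem_Icc_of_map_max_max hmax hu hw
  ⟨⟨h₀'.1, hmax'.2⟩, ⟨hmax'.1, h₀'.2⟩⟩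

end HasBoundedMonotoneSlopes

section Lanes

variable {M : ℕ} {R : ℕ → ℝ} {𝒮 : ℝ} {S : ℕ → ℝ → ℝ → ℝ} {ρ : ℕ → ℝ} {j : ℕ}

theorem inflow_mem_Icc (h𝒮 : 0 ≤ 𝒮) (hS0 : ∀ u w, S 0 u w = 0)
    (hflux : ∀ k, 1 ≤ k → k ≤ M - 1 → FluxBound (S k) 𝒮 (R k) (R (k + 1)))
    (hρ : ∀ k, 1 ≤ k → k ≤ M → ρ k ∈ Icc 0 (R k)) (hj₁ : 1 ≤ j) (hjM : j ≤ M) :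
    S (j - 1) (ρ (j - 1)) (ρ j) ∈ Icc (-(𝒮 * ρ j)) (𝒮 * (R j - ρ j)) := by
  have hρj := hρ j hj₁ hjM
  rcases hj₁.eq_or_lt with rfl | hj
  · rw [hS0]
    exact ⟨neg_nonpos.2 (mul_nonneg h𝒮 hρj.1), mul_nonneg h𝒮 (sub_nonneg.2 hρj.2)⟩
  · obtain ⟨k, rfl⟩ : ∃ k, j = k + 1 := ⟨j - 1, by omega⟩
    rw [Nat.add_sub_cancel]
    exact (hflux k (by omega) (by omega) _ (hρ k (by omega) (by omega)) _ hρj).1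

theorem outflow_mem_Icc (h𝒮 : 0 ≤ 𝒮) (hSM : ∀ u w, S M u w = 0)
    (hflux : ∀ k, 1 ≤ k → k ≤ M - 1 → FluxBound (S k) 𝒮 (R k) (R (k + 1)))
    (hρ : ∀ k, 1 ≤ k → k ≤ M → ρ k ∈ Icc 0 (R k)) (hj₁ : 1 ≤ j) (hjM : j ≤ M) :
    S j (ρ j) (ρ (j + 1)) ∈ Icc (-(𝒮 * (R j - ρ j))) (𝒮 * ρ j) := by
  have hρj := hρ j hj₁ hjM
  rcases hjM.eq_or_lt with rfl | hj
  · rw [hSM]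
    exact ⟨neg_nonpos.2 (mul_nonneg h𝒮 (sub_nonneg.2 hρj.2)), mul_nonneg h𝒮 hρj.1⟩
  · exact (hflux j hj₁ (by omega) _ hρj _ (hρ (j + 1) (by omega) (by omega))).2

end Lanes

theorem add_mul_sub_mem_Icc {𝒮 lam ρ R A B : ℝ} (hlam : 0 ≤ lam) (hlam𝒮 : 2 * 𝒮 * lam ≤ 1)
    (hρ : ρ ∈ Icc 0 R) (hA : A ∈ Icc (-(𝒮 * ρ)) (𝒮 * (R - ρ)))
    (hB : B ∈ Icc (-(𝒮 * (R - ρ))) (𝒮 * ρ)) :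
    ρ + lam * (A - B) ∈ Icc 0 R := by
  obtain ⟨hρ₀, hρR⟩ := hρ
  have hloss : -(2 * 𝒮 * ρ) ≤ A - B := by linarith [hA.1, hB.2]
  have hgain : A - B ≤ 2 * 𝒮 * (R - ρ) := by linarith [hA.2, hB.1]
  constructor
  · nlinarith [mul_le_mul_of_nonneg_left hloss hlam, mul_nonneg (sub_nonneg.2 hlam𝒮) hρ₀]
  · nlinarith [mul_le_mul_of_nonneg_left hgain hlam,
      mul_nonneg (sub_nonneg.2 hlam𝒮) (sub_nonneg.2 hρR)]

theorem relaxation_step_invariant_box_general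
(M : ℕ)
    (R : ℕ → ℝ)
    (𝒮 τ Δt : ℝ) (h𝒮 : 0 < 𝒮) (hτ : 0 < τ) (hΔt : 0 < Δt)
    (hΔtτ : Δt ≤ τ / (2 * 𝒮))
    (S : ℕ → ℝ → ℝ → ℝ)
    (hS0 : ∀ u w, S 0 u w = 0)
    (hSM : ∀ u w, S M u w = 0)
    (hSC1 : ∀ j, 1 ≤ j → j ≤ M - 1 → ContDiff ℝ 1 (Function.uncurry (S j)))
    (hS1 : ∀ j, 1 ≤ j → j ≤ M - 1 → ∀ u ∈ Icc (0:ℝ) (R j), ∀ w ∈ Icc (0:ℝ) (R (j+1)),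
      deriv (fun u' => S j u' w) u ∈ Icc (0:ℝ) 𝒮)
    (hS2 : ∀ j, 1 ≤ j → j ≤ M - 1 → ∀ u ∈ Icc (0:ℝ) (R j), ∀ w ∈ Icc (0:ℝ) (R (j+1)),
      deriv (fun w' => S j u w') w ∈ Icc (-𝒮) (0:ℝ))
    (hS00 : ∀ j, 1 ≤ j → j ≤ M - 1 → S j 0 0 = 0)
    (hSRR : ∀ j, 1 ≤ j → j ≤ M - 1 → S j (R j) (R (j+1)) = 0)
    (g : (ℕ → ℝ) → ℕ → ℝ)
    (hg : ∀ ρ j, g ρ j = S (j-1) (ρ (j-1)) (ρ j) - S j (ρ j) (ρ (j+1)))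
    (T : (ℕ → ℝ) → ℕ → ℝ)
    (hT : ∀ ρ j, T ρ j = ρ j + (Δt / τ) * g ρ j)
    (ρ : ℕ → ℝ) (hρ : ∀ j, 1 ≤ j → j ≤ M → ρ j ∈ Icc (0:ℝ) (R j)) :
    ∀ j, 1 ≤ j → j ≤ M → T ρ j ∈ Icc (0:ℝ) (R j) := by
  have hflux : ∀ k, 1 ≤ k → k ≤ M - 1 → FluxBound (S k) 𝒮 (R k) (R (k + 1)) :=
    fun k hk₁ hkM => HasBoundedMonotoneSlopes.fluxBound
      ⟨(hSC1 k hk₁ hkM).differentiable one_ne_zero, hS1 k hk₁ hkM, hS2 k hk₁ hkM⟩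
      (hS00 k hk₁ hkM) (hSRR k hk₁ hkM)
  have hCFL : 2 * 𝒮 * (Δt / τ) ≤ 1 := by
    rw [le_div_iff₀ (by positivity)] at hΔtτ
    rw [← mul_div_assoc, div_le_one hτ]
    linarith
  intro j hj₁ hjM
  rw [hT, hg]
  exact add_mul_sub_mem_Icc (by positivity) hCFL (hρ j hj₁ hjM)
    (inflow_mem_Icc h𝒮.le hS0 hflux hρ hj₁ hjM) (outflow_mem_Icc h𝒮.le hSM hflux hρ hj₁ hjM)

/-- Discrete core of Lemma 2.3: the relaxation step preserves the box
∏_{j=1}^M [0, R_j] of admissible densities. -/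
theorem relaxation_step_invariant_box
(M : ℕ) (hM : 1 ≤ M)
    (R : ℕ → ℝ) (hR : ∀ j, 1 ≤ j → j ≤ M → 0 < R j)
    (𝒮 τ Δt : ℝ) (h𝒮 : 0 < 𝒮) (hτ : 0 < τ) (hΔt : 0 < Δt)
    (hΔtτ : Δt ≤ τ / (2 * 𝒮))
    (S : ℕ → ℝ → ℝ → ℝ)
    (hS0 : ∀ u w, S 0 u w = 0)
    (hSM : ∀ u w, S M u w = 0)
    (hSC1 : ∀ j, 1 ≤ j → j ≤ M - 1 → ContDiff ℝ 1 (Function.uncurry (S j)))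
    (hS1 : ∀ j, 1 ≤ j → j ≤ M - 1 → ∀ u ∈ Icc (0:ℝ) (R j), ∀ w ∈ Icc (0:ℝ) (R (j+1)),
      deriv (fun u' => S j u' w) u ∈ Icc (0:ℝ) 𝒮)
    (hS2 : ∀ j, 1 ≤ j → j ≤ M - 1 → ∀ u ∈ Icc (0:ℝ) (R j), ∀ w ∈ Icc (0:ℝ) (R (j+1)),
      deriv (fun w' => S j u w') w ∈ Icc (-𝒮) (0:ℝ))
    (hS00 : ∀ j, 1 ≤ j → j ≤ M - 1 → S j 0 0 = 0)
    (hSRR : ∀ j, 1 ≤ j → j ≤ M - 1 → S j (R j) (R (j+1)) = 0)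
    (g : (ℕ → ℝ) → ℕ → ℝ)
    (hg : ∀ ρ j, g ρ j = S (j-1) (ρ (j-1)) (ρ j) - S j (ρ j) (ρ (j+1)))
    (T : (ℕ → ℝ) → ℕ → ℝ)
    (hT : ∀ ρ j, T ρ j = ρ j + (Δt / τ) * g ρ j)
    (ρ : ℕ → ℝ) (hρ : ∀ j, 1 ≤ j → j ≤ M → ρ j ∈ Icc (0:ℝ) (R j)) :
    ∀ j, 1 ≤ j → j ≤ M → T ρ j ∈ Icc (0:ℝ) (R j) :=
  relaxation_step_invariant_box_general M R 𝒮 τ Δt h𝒮 hτ hΔt hΔtτ S hS0 hSM hSC1 hS1 hS2 hS00 hSRR g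
    hg T hT ρ hρ
end

section
/- Under the stated assumptions, for any fixed lane index j ∈ {1,…,M} and any fixed neighbouring values a ∈ [0,R_{j−1}] and b ∈ [0,R_{j+1}], the single-lane update map φ(u) = u + (Δt/τ)·(S_{j−1}(a,u) − S_j(u,b)) is nondecreasing on [0,R_j] and is 1-Lipschitz there: |φ(u) − φ(u′)| ≤ |u − u′| for all u, u′ ∈ [0,R_j]. (This is the jump-contraction mechanism in the proof of Lemma 2.4, showing that the relaxation step does not increase the size of a density jump when the neighbouring lanes are continuous across the jump.) -/
/-!
The update map is `φ = id + c (g - h)` with `c = Δt/τ`, where `g = S_{j-1}(a, ·)` has slope in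
`[-𝒮, 0]` and `h = S_j(·, b)` has slope in `[0, 𝒮]`. Hence `φ' = 1 + c (g' - h') ∈ [1 - 2c𝒮, 1]`,
and the CFL condition `2c𝒮 ≤ 1` puts `φ'` in `[0, 1]` on `[0, R_j]`; by the mean value theorem
`φ` is then monotone and `1`-Lipschitz there.
-/

open Set

theorem one_add_mul_sub_mem_Icc {c 𝒮 p q : ℝ} (hc : 0 ≤ c) (hc𝒮 : c * (2 * 𝒮) ≤ 1)
    (hp : p ∈ Icc (-𝒮) 0) (hq : q ∈ Icc 0 𝒮) : 1 + c * (p - q) ∈ Icc (0 : ℝ) 1 := by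
  obtain ⟨hp₁, hp₂⟩ := hp
  obtain ⟨hq₁, hq₂⟩ := hq
  constructor <;> nlinarith

theorem div_mul_two_mul_le_one {Δt τ 𝒮 : ℝ} (hτ : 0 < τ) (h𝒮 : 0 < 𝒮)
    (hΔtτ : Δt ≤ τ / (2 * 𝒮)) : Δt / τ * (2 * 𝒮) ≤ 1 := by
  rw [div_mul_eq_mul_div, div_le_one hτ]
  exact (le_div_iff₀ (by positivity)).1 hΔtτ

theorem differentiable_uncurry_apply_left {F : ℝ → ℝ → ℝ} (hF : ContDiff ℝ 1 (Function.uncurry F))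
    (a : ℝ) : Differentiable ℝ (F a) :=
  (hF.differentiable one_ne_zero).comp ((differentiable_const a).prodMk differentiable_id)

theorem differentiable_uncurry_apply_right {F : ℝ → ℝ → ℝ}
    (hF : ContDiff ℝ 1 (Function.uncurry F)) (b : ℝ) : Differentiable ℝ (fun u => F u b) :=
  (hF.differentiable one_ne_zero).comp (differentiable_id.prodMk (differentiable_const b))

theorem HasDerivAt.id_add_mul_sub {g h : ℝ → ℝ} {g' h' : ℝ} (c : ℝ) {u : ℝ}
    (hg : HasDerivAt g g' u) (hh : HasDerivAt h h' u) :
    HasDerivAt (fun v => v + c * (g v - h v)) (1 + c * (g' - h')) u :=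
  (hasDerivAt_id u).add ((hg.sub hh).const_mul c)

theorem abs_sub_le_of_deriv_mem_Icc {f : ℝ → ℝ} {D : Set ℝ} (hD : Convex ℝ D)
    (hf : Differentiable ℝ f) (hf' : ∀ x ∈ D, deriv f x ∈ Icc (0 : ℝ) 1) {x y : ℝ} (hx : x ∈ D)
    (hy : y ∈ D) : |f x - f y| ≤ |x - y| := by
  have hbound : ∀ z ∈ D, ‖deriv f z‖ ≤ 1 := fun z hz =>
    abs_le.2 ⟨by linarith [(hf' z hz).1], (hf' z hz).2⟩
  simpa [Real.norm_eq_abs] using hD.norm_image_sub_le_of_norm_deriv_le (fun z _ => hf z) hbound hy hx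

section Lanes

variable {M : ℕ} {R : ℕ → ℝ} {𝒮 : ℝ} {S : ℕ → ℝ → ℝ → ℝ}

theorem inflow_differentiable_and_deriv_mem (h𝒮 : 0 ≤ 𝒮) (hS0 : ∀ u w, S 0 u w = 0)
    (hSC1 : ∀ j, 1 ≤ j → j ≤ M - 1 → ContDiff ℝ 1 (Function.uncurry (S j)))
    (hS2 : ∀ j, 1 ≤ j → j ≤ M - 1 → ∀ u ∈ Icc (0:ℝ) (R j), ∀ w ∈ Icc (0:ℝ) (R (j+1)),
      deriv (fun w' => S j u w') w ∈ Icc (-𝒮) (0:ℝ))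
    {j : ℕ} (hj1 : 1 ≤ j) (hjM : j ≤ M) {a : ℝ} (ha : a ∈ Icc (0:ℝ) (R (j-1))) :
    Differentiable ℝ (S (j-1) a) ∧ ∀ u ∈ Icc (0:ℝ) (R j), deriv (S (j-1) a) u ∈ Icc (-𝒮) 0 := by
  rcases hj1.eq_or_lt with rfl | hj1
  · have hzero : S (1-1) a = fun _ => 0 := funext (hS0 a)
    rw [hzero]
    exact ⟨differentiable_const _, fun u _ => by simpa using h𝒮⟩
  · have hj : j - 1 + 1 = j := by omega
    refine ⟨differentiable_uncurry_apply_left (hSC1 (j-1) (by omega) (by omega)) a, ?_⟩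
    intro u hu
    exact hS2 (j-1) (by omega) (by omega) a ha u (hj ▸ hu)

theorem outflow_differentiable_and_deriv_mem (h𝒮 : 0 ≤ 𝒮) (hSM : ∀ u w, S M u w = 0)
    (hSC1 : ∀ j, 1 ≤ j → j ≤ M - 1 → ContDiff ℝ 1 (Function.uncurry (S j)))
    (hS1 : ∀ j, 1 ≤ j → j ≤ M - 1 → ∀ u ∈ Icc (0:ℝ) (R j), ∀ w ∈ Icc (0:ℝ) (R (j+1)),
      deriv (fun u' => S j u' w) u ∈ Icc (0:ℝ) 𝒮)
    {j : ℕ} (hj1 : 1 ≤ j) (hjM : j ≤ M) {b : ℝ} (hb : b ∈ Icc (0:ℝ) (R (j+1))) :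
    Differentiable ℝ (fun u => S j u b) ∧
      ∀ u ∈ Icc (0:ℝ) (R j), deriv (fun u => S j u b) u ∈ Icc 0 𝒮 := by
  rcases hjM.eq_or_lt with rfl | hjM
  · have hzero : (fun u => S j u b) = fun _ => 0 := funext fun u => hSM u b
    rw [hzero]
    exact ⟨differentiable_const _, fun u _ => by simpa using h𝒮⟩
  · exact ⟨differentiable_uncurry_apply_right (hSC1 j hj1 (by omega)) b,
      fun u hu => hS1 j hj1 (by omega) u hu b hb⟩

end Lanes

theorem single_lane_update_monotone_lipschitz_general
    (M : ℕ)
    (R : ℕ → ℝ)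
    (𝒮 τ Δt : ℝ) (h𝒮 : 0 < 𝒮) (hτ : 0 < τ) (hΔt : 0 < Δt)
    (hΔtτ : Δt ≤ τ / (2 * 𝒮))
    (S : ℕ → ℝ → ℝ → ℝ)
    (hS0 : ∀ u w, S 0 u w = 0)
    (hSM : ∀ u w, S M u w = 0)
    (hSC1 : ∀ j, 1 ≤ j → j ≤ M - 1 → ContDiff ℝ 1 (Function.uncurry (S j)))
    (hS1 : ∀ j, 1 ≤ j → j ≤ M - 1 → ∀ u ∈ Icc (0:ℝ) (R j), ∀ w ∈ Icc (0:ℝ) (R (j+1)),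
      deriv (fun u' => S j u' w) u ∈ Icc (0:ℝ) 𝒮)
    (hS2 : ∀ j, 1 ≤ j → j ≤ M - 1 → ∀ u ∈ Icc (0:ℝ) (R j), ∀ w ∈ Icc (0:ℝ) (R (j+1)),
      deriv (fun w' => S j u w') w ∈ Icc (-𝒮) (0:ℝ))
    (j : ℕ) (hj1 : 1 ≤ j) (hjM : j ≤ M)
    (a b : ℝ) (ha : a ∈ Icc (0:ℝ) (R (j-1))) (hb : b ∈ Icc (0:ℝ) (R (j+1)))
    (φ : ℝ → ℝ)
    (hφ : ∀ u, φ u = u + (Δt / τ) * (S (j-1) a u - S j u b)) :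
    (∀ u ∈ Icc (0:ℝ) (R j), ∀ u' ∈ Icc (0:ℝ) (R j), u ≤ u' → φ u ≤ φ u') ∧
    (∀ u ∈ Icc (0:ℝ) (R j), ∀ u' ∈ Icc (0:ℝ) (R j), |φ u - φ u'| ≤ |u - u'|) := by
  obtain ⟨hg, hg'⟩ := inflow_differentiable_and_deriv_mem h𝒮.le hS0 hSC1 hS2 hj1 hjM ha
  obtain ⟨hh, hh'⟩ := outflow_differentiable_and_deriv_mem h𝒮.le hSM hSC1 hS1 hj1 hjM hb
  have hφ_deriv : ∀ u, HasDerivAt φ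
      (1 + Δt / τ * (deriv (S (j-1) a) u - deriv (fun u => S j u b) u)) u := fun u =>
    funext hφ ▸ (hg u).hasDerivAt.id_add_mul_sub (Δt / τ) (hh u).hasDerivAt
  have hφ_diff : Differentiable ℝ φ := fun u => (hφ_deriv u).differentiableAt
  have hφ' : ∀ u ∈ Icc (0:ℝ) (R j), deriv φ u ∈ Icc (0:ℝ) 1 := fun u hu =>
    (hφ_deriv u).deriv ▸ one_add_mul_sub_mem_Icc (div_pos hΔt hτ).le
      (div_mul_two_mul_le_one hτ h𝒮 hΔtτ) (hg' u hu) (hh' u hu)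
  refine ⟨monotoneOn_of_deriv_nonneg (convex_Icc _ _) hφ_diff.continuous.continuousOn
    hφ_diff.differentiableOn fun u hu => (hφ' u (interior_subset hu)).1, ?_⟩
  exact fun u hu u' hu' => abs_sub_le_of_deriv_mem_Icc (convex_Icc _ _) hφ_diff hφ' hu hu'

/-- Jump-contraction mechanism in the proof of Lemma 2.4: for fixed neighbouring
values, the single-lane update map φ(u) = u + (Δt/τ)(S_{j-1}(a,u) - S_j(u,b)) is
nondecreasing and 1-Lipschitz on [0, R_j]. -/
theorem single_lane_update_monotone_lipschitz
    (M : ℕ) (hM : 1 ≤ M)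
    (R : ℕ → ℝ) (hR : ∀ j, 1 ≤ j → j ≤ M → 0 < R j)
    (hR0 : R 0 = 0) (hRM1 : R (M+1) = 0)
    (𝒮 τ Δt : ℝ) (h𝒮 : 0 < 𝒮) (hτ : 0 < τ) (hΔt : 0 < Δt)
    (hΔtτ : Δt ≤ τ / (2 * 𝒮))
    (S : ℕ → ℝ → ℝ → ℝ)
    (hS0 : ∀ u w, S 0 u w = 0)
    (hSM : ∀ u w, S M u w = 0)
    (hSC1 : ∀ j, 1 ≤ j → j ≤ M - 1 → ContDiff ℝ 1 (Function.uncurry (S j)))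
    (hS1 : ∀ j, 1 ≤ j → j ≤ M - 1 → ∀ u ∈ Icc (0:ℝ) (R j), ∀ w ∈ Icc (0:ℝ) (R (j+1)),
      deriv (fun u' => S j u' w) u ∈ Icc (0:ℝ) 𝒮)
    (hS2 : ∀ j, 1 ≤ j → j ≤ M - 1 → ∀ u ∈ Icc (0:ℝ) (R j), ∀ w ∈ Icc (0:ℝ) (R (j+1)),
      deriv (fun w' => S j u w') w ∈ Icc (-𝒮) (0:ℝ))
    (hS00 : ∀ j, 1 ≤ j → j ≤ M - 1 → S j 0 0 = 0)
    (hSRR : ∀ j, 1 ≤ j → j ≤ M - 1 → S j (R j) (R (j+1)) = 0)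
    (j : ℕ) (hj1 : 1 ≤ j) (hjM : j ≤ M)
    (a b : ℝ) (ha : a ∈ Icc (0:ℝ) (R (j-1))) (hb : b ∈ Icc (0:ℝ) (R (j+1)))
    (φ : ℝ → ℝ)
    (hφ : ∀ u, φ u = u + (Δt / τ) * (S (j-1) a u - S j u b)) :
    (∀ u ∈ Icc (0:ℝ) (R j), ∀ u' ∈ Icc (0:ℝ) (R j), u ≤ u' → φ u ≤ φ u') ∧
    (∀ u ∈ Icc (0:ℝ) (R j), ∀ u' ∈ Icc (0:ℝ) (R j), |φ u - φ u'| ≤ |u - u'|) :=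
  single_lane_update_monotone_lipschitz_general M R 𝒮 τ Δt h𝒮 hτ hΔt hΔtτ S hS0 hSM hSC1 hS1 hS2 j
    hj1 hjM a b ha hb φ hφ
end

section
/- Under the stated assumptions, the relaxation step is order preserving: if ρ, σ ∈ ∏_{j=1}^M [0,R_j] satisfy ρ_j ≤ σ_j for every j = 1,…,M, then T_j(ρ) ≤ T_j(σ) for every j = 1,…,M. (This is the monotonicity step in the proof of Lemma 3.2, used to apply the Crandall–Tartar lemma.) -/
open Set

/-
In lane `j` the step reads `T_j(ρ) = ρ_j + k (S_{j-1}(ρ_{j-1}, ρ_j) - S_j(ρ_j, ρ_{j+1}))` with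
`k = Δt/τ`. It is nondecreasing in `ρ_{j-1}` and `ρ_{j+1}` by the signs of `∂₁S_{j-1}` and
`∂₂S_j`, while both partial derivatives acting on `ρ_j` are bounded by `𝒮` in absolute value,
so moving `ρ_j` up by `d` changes `T_j` by at least `d (1 - 2k𝒮) ≥ 0`. The mean value theorem
turns these derivative bounds into bounds on increments over the box of admissible densities.
-/

theorem sub_mem_Icc_of_deriv_mem_Icc_s2 {f : ℝ → ℝ} {D : Set ℝ} {lo hi : ℝ}
    (hf : Differentiable ℝ f) (hD : Convex ℝ D) (hderiv : ∀ x ∈ D, deriv f x ∈ Icc lo hi)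
    {x y : ℝ} (hx : x ∈ D) (hy : y ∈ D) (hxy : x ≤ y) :
    f y - f x ∈ Icc (lo * (y - x)) (hi * (y - x)) :=
  ⟨hD.mul_sub_le_image_sub_of_le_deriv hf.continuous.continuousOn hf.differentiableOn
      (fun z hz => (hderiv z (interior_subset hz)).1) x hx y hy hxy,
    hD.image_sub_le_mul_sub_of_deriv_le hf.continuous.continuousOn hf.differentiableOn
      (fun z hz => (hderiv z (interior_subset hz)).2) x hx y hy hxy⟩

theorem sub_mem_Icc_of_partialDerivs_mem_Icc {F : ℝ → ℝ → ℝ} {I J : Set ℝ} {C : ℝ}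
    (hF : Differentiable ℝ (Function.uncurry F)) (hI : Convex ℝ I) (hJ : Convex ℝ J)
    (h₁ : ∀ u ∈ I, ∀ w ∈ J, deriv (fun u' => F u' w) u ∈ Icc 0 C)
    (h₂ : ∀ u ∈ I, ∀ w ∈ J, deriv (fun w' => F u w') w ∈ Icc (-C) 0)
    {u₁ u₂ w₁ w₂ : ℝ} (hu₁ : u₁ ∈ I) (hu₂ : u₂ ∈ I) (hw₁ : w₁ ∈ J) (hw₂ : w₂ ∈ J)
    (hu : u₁ ≤ u₂) (hw : w₁ ≤ w₂) :
    F u₂ w₂ - F u₁ w₁ ∈ Icc (-C * (w₂ - w₁)) (C * (u₂ - u₁)) := by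
  have hstep_u := sub_mem_Icc_of_deriv_mem_Icc_s2 (f := fun u => F u w₂)
    (hF.comp (differentiable_id.prodMk (differentiable_const w₂))) hI
    (fun u hu => h₁ u hu w₂ hw₂) hu₁ hu₂ hu
  have hstep_w := sub_mem_Icc_of_deriv_mem_Icc_s2 (f := fun w => F u₁ w)
    (hF.comp ((differentiable_const u₁).prodMk differentiable_id)) hJ
    (fun w hw => h₂ u₁ hu₁ w hw) hw₁ hw₂ hw
  simp only [zero_mul, mem_Icc] at hstep_u hstep_w
  constructor <;> linarith [hstep_u.1, hstep_u.2, hstep_w.1, hstep_w.2]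

theorem exchange_increment_mem_Icc {M : ℕ} {R : ℕ → ℝ} {𝒮 : ℝ} {S : ℕ → ℝ → ℝ → ℝ}
    (hSC1 : ∀ j, 1 ≤ j → j ≤ M - 1 → ContDiff ℝ 1 (Function.uncurry (S j)))
    (hS1 : ∀ j, 1 ≤ j → j ≤ M - 1 → ∀ u ∈ Icc (0:ℝ) (R j), ∀ w ∈ Icc (0:ℝ) (R (j+1)),
      deriv (fun u' => S j u' w) u ∈ Icc (0:ℝ) 𝒮)
    (hS2 : ∀ j, 1 ≤ j → j ≤ M - 1 → ∀ u ∈ Icc (0:ℝ) (R j), ∀ w ∈ Icc (0:ℝ) (R (j+1)),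
      deriv (fun w' => S j u w') w ∈ Icc (-𝒮) (0:ℝ))
    {ρ σ : ℕ → ℝ}
    (hρ : ∀ j, 1 ≤ j → j ≤ M → ρ j ∈ Icc (0:ℝ) (R j))
    (hσ : ∀ j, 1 ≤ j → j ≤ M → σ j ∈ Icc (0:ℝ) (R j))
    (hle : ∀ j, 1 ≤ j → j ≤ M → ρ j ≤ σ j)
    {i : ℕ} (hi : 1 ≤ i) (hiM : i + 1 ≤ M) :
    S i (σ i) (σ (i+1)) - S i (ρ i) (ρ (i+1)) ∈
      Icc (-𝒮 * (σ (i+1) - ρ (i+1))) (𝒮 * (σ i - ρ i)) :=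
  have hiM' : i ≤ M - 1 := by omega
  sub_mem_Icc_of_partialDerivs_mem_Icc ((hSC1 i hi hiM').differentiable one_ne_zero)
    (convex_Icc _ _) (convex_Icc _ _) (hS1 i hi hiM') (hS2 i hi hiM')
    (hρ i hi (by omega)) (hσ i hi (by omega)) (hρ (i+1) (by omega) hiM)
    (hσ (i+1) (by omega) hiM) (hle i hi (by omega)) (hle (i+1) (by omega) hiM)

theorem relaxation_step_order_preserving_general
(M : ℕ)
    (R : ℕ → ℝ)
    (𝒮 τ Δt : ℝ) (h𝒮 : 0 < 𝒮) (hτ : 0 < τ) (hΔt : 0 < Δt)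
    (hΔtτ : Δt ≤ τ / (2 * 𝒮))
    (S : ℕ → ℝ → ℝ → ℝ)
    (hS0 : ∀ u w, S 0 u w = 0)
    (hSM : ∀ u w, S M u w = 0)
    (hSC1 : ∀ j, 1 ≤ j → j ≤ M - 1 → ContDiff ℝ 1 (Function.uncurry (S j)))
    (hS1 : ∀ j, 1 ≤ j → j ≤ M - 1 → ∀ u ∈ Icc (0:ℝ) (R j), ∀ w ∈ Icc (0:ℝ) (R (j+1)),
      deriv (fun u' => S j u' w) u ∈ Icc (0:ℝ) 𝒮)
    (hS2 : ∀ j, 1 ≤ j → j ≤ M - 1 → ∀ u ∈ Icc (0:ℝ) (R j), ∀ w ∈ Icc (0:ℝ) (R (j+1)),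
      deriv (fun w' => S j u w') w ∈ Icc (-𝒮) (0:ℝ))
    (g : (ℕ → ℝ) → ℕ → ℝ)
    (hg : ∀ ρ j, g ρ j = S (j-1) (ρ (j-1)) (ρ j) - S j (ρ j) (ρ (j+1)))
    (T : (ℕ → ℝ) → ℕ → ℝ)
    (hT : ∀ ρ j, T ρ j = ρ j + (Δt / τ) * g ρ j)
    (ρ σ : ℕ → ℝ)
    (hρ : ∀ j, 1 ≤ j → j ≤ M → ρ j ∈ Icc (0:ℝ) (R j))
    (hσ : ∀ j, 1 ≤ j → j ≤ M → σ j ∈ Icc (0:ℝ) (R j))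
    (hle : ∀ j, 1 ≤ j → j ≤ M → ρ j ≤ σ j) :
    ∀ j, 1 ≤ j → j ≤ M → T ρ j ≤ T σ j := by
  intro j hj hjM
  have hd : 0 ≤ σ j - ρ j := sub_nonneg.2 (hle j hj hjM)
  have hinflow : -𝒮 * (σ j - ρ j) ≤ S (j-1) (σ (j-1)) (σ j) - S (j-1) (ρ (j-1)) (ρ j) := by
    obtain rfl | hj2 : j = 1 ∨ 2 ≤ j := by omega
    · simp only [Nat.sub_self, hS0, sub_self]
      nlinarith
    · obtain ⟨i, rfl⟩ : ∃ i, j = i + 1 := ⟨j - 1, by omega⟩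
      exact (exchange_increment_mem_Icc hSC1 hS1 hS2 hρ hσ hle (by omega) hjM).1
  have houtflow : S j (σ j) (σ (j+1)) - S j (ρ j) (ρ (j+1)) ≤ 𝒮 * (σ j - ρ j) := by
    obtain rfl | hjM' : j = M ∨ j + 1 ≤ M := by omega
    · simp only [hSM, sub_self]
      positivity
    · exact (exchange_increment_mem_Icc hSC1 hS1 hS2 hρ hσ hle hj hjM').2
  have hk : 0 ≤ Δt / τ := by positivity
  have hk𝒮 : Δt / τ * (2 * 𝒮) ≤ 1 := by
    rw [div_mul_eq_mul_div, div_le_one hτ]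
    exact (le_div_iff₀ (by positivity)).1 hΔtτ
  rw [hT, hT, hg, hg]
  nlinarith [mul_nonneg hk (sub_nonneg.2 hinflow), mul_nonneg hk (sub_nonneg.2 houtflow),
    mul_nonneg hd (sub_nonneg.2 hk𝒮)]

/-- Monotonicity step in the proof of Lemma 3.2: the relaxation step is
order preserving on the box of admissible densities. -/
theorem relaxation_step_order_preserving
(M : ℕ) (hM : 1 ≤ M)
    (R : ℕ → ℝ) (hR : ∀ j, 1 ≤ j → j ≤ M → 0 < R j)
    (𝒮 τ Δt : ℝ) (h𝒮 : 0 < 𝒮) (hτ : 0 < τ) (hΔt : 0 < Δt)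
    (hΔtτ : Δt ≤ τ / (2 * 𝒮))
    (S : ℕ → ℝ → ℝ → ℝ)
    (hS0 : ∀ u w, S 0 u w = 0)
    (hSM : ∀ u w, S M u w = 0)
    (hSC1 : ∀ j, 1 ≤ j → j ≤ M - 1 → ContDiff ℝ 1 (Function.uncurry (S j)))
    (hS1 : ∀ j, 1 ≤ j → j ≤ M - 1 → ∀ u ∈ Icc (0:ℝ) (R j), ∀ w ∈ Icc (0:ℝ) (R (j+1)),
      deriv (fun u' => S j u' w) u ∈ Icc (0:ℝ) 𝒮)
    (hS2 : ∀ j, 1 ≤ j → j ≤ M - 1 → ∀ u ∈ Icc (0:ℝ) (R j), ∀ w ∈ Icc (0:ℝ) (R (j+1)),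
      deriv (fun w' => S j u w') w ∈ Icc (-𝒮) (0:ℝ))
    (hS00 : ∀ j, 1 ≤ j → j ≤ M - 1 → S j 0 0 = 0)
    (hSRR : ∀ j, 1 ≤ j → j ≤ M - 1 → S j (R j) (R (j+1)) = 0)
    (g : (ℕ → ℝ) → ℕ → ℝ)
    (hg : ∀ ρ j, g ρ j = S (j-1) (ρ (j-1)) (ρ j) - S j (ρ j) (ρ (j+1)))
    (T : (ℕ → ℝ) → ℕ → ℝ)
    (hT : ∀ ρ j, T ρ j = ρ j + (Δt / τ) * g ρ j)
    (ρ σ : ℕ → ℝ)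
    (hρ : ∀ j, 1 ≤ j → j ≤ M → ρ j ∈ Icc (0:ℝ) (R j))
    (hσ : ∀ j, 1 ≤ j → j ≤ M → σ j ∈ Icc (0:ℝ) (R j))
    (hle : ∀ j, 1 ≤ j → j ≤ M → ρ j ≤ σ j) :
    ∀ j, 1 ≤ j → j ≤ M → T ρ j ≤ T σ j :=
  relaxation_step_order_preserving_general M R 𝒮 τ Δt h𝒮 hτ hΔt hΔtτ S hS0 hSM hSC1 hS1 hS2 g hg T
    hT ρ σ hρ hσ hle
end

section
/- Under the stated assumptions, the relaxation step is an ℓ¹-contraction on the box of admissible densities: for all ρ, σ ∈ ∏_{j=1}^M [0,R_j], one has ∑_{j=1}^M |T_j(ρ) − T_j(σ)| ≤ ∑_{j=1}^M |ρ_j − σ_j|. (Pointwise core of the contraction estimate (FL2) in the proof of Lemma 3.2, obtained from monotonicity and mass conservation of the relaxation step via the Crandall–Tartar lemma.) -/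
/-!
The relaxation step is order-preserving on the box of densities: `T_j` increases in `ρ_{j-1}`
and `ρ_{j+1}` because `∂₁S ≥ 0 ≥ ∂₂S`, and in `ρ_j` because its slope there is at least
`1 - 2 (Δt/τ) 𝒮 ≥ 0`. It conserves mass, since the exchange terms telescope and `S_0 = S_M = 0`.
Crandall–Tartar then gives the contraction: `|a - b| = 2 max a b - a - b` and
`max (T ρ) (T σ) ≤ T (ρ ⊔ σ)`, so by mass conservation `∑ |T ρ - T σ|` is at most
`2 ∑ (ρ ⊔ σ) - ∑ ρ - ∑ σ = ∑ |ρ - σ|`.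
-/

open Set

theorem abs_sub_eq_max_add_max_sub_sub {α : Type*} [AddCommGroup α] [LinearOrder α]
    [IsOrderedAddMonoid α] (a b : α) : |a - b| = max a b + max a b - a - b := by
  rw [← max_sub_min_eq_abs', sub_sub, ← min_add_max a b]
  abel

/-- Crandall–Tartar lemma. -/
theorem Finset.sum_abs_sub_le_of_monotone_of_sum_eq {ι α : Type*} [AddCommGroup α] [LinearOrder α]
    [IsOrderedAddMonoid α] (s : Finset ι) {D : Set (ι → α)}
    (hD : ∀ ρ ∈ D, ∀ σ ∈ D, ρ ⊔ σ ∈ D) {T : (ι → α) → ι → α}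
    (hmono : ∀ ρ ∈ D, ∀ σ ∈ D, ρ ≤ σ → ∀ j ∈ s, T ρ j ≤ T σ j)
    (hmass : ∀ ρ ∈ D, ∑ j ∈ s, T ρ j = ∑ j ∈ s, ρ j) {ρ σ : ι → α} (hρ : ρ ∈ D) (hσ : σ ∈ D) :
    ∑ j ∈ s, |T ρ j - T σ j| ≤ ∑ j ∈ s, |ρ j - σ j| := by
  have hsup := hD ρ hρ σ hσ
  calc ∑ j ∈ s, |T ρ j - T σ j|
      = ∑ j ∈ s, (max (T ρ j) (T σ j) + max (T ρ j) (T σ j) - T ρ j - T σ j) := by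
        simp only [abs_sub_eq_max_add_max_sub_sub]
    _ ≤ ∑ j ∈ s, (T (ρ ⊔ σ) j + T (ρ ⊔ σ) j - T ρ j - T σ j) := by
        gcongr with j hj <;>
          exact max_le (hmono ρ hρ _ hsup le_sup_left j hj) (hmono σ hσ _ hsup le_sup_right j hj)
    _ = ∑ j ∈ s, ((ρ ⊔ σ) j + (ρ ⊔ σ) j - ρ j - σ j) := by
        simp only [Finset.sum_sub_distrib, Finset.sum_add_distrib, hmass _ hsup, hmass _ hρ,
          hmass _ hσ]
    _ = ∑ j ∈ s, |ρ j - σ j| := by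
        simp only [Pi.sup_apply, abs_sub_eq_max_add_max_sub_sub]

theorem Finset.sum_Icc_one_sub_eq {α : Type*} [AddCommGroup α] (f : ℕ → α) (n : ℕ) :
    ∑ j ∈ Finset.Icc 1 n, (f (j - 1) - f j) = f 0 - f n := by
  induction n with
  | zero => simp
  | succ n ih =>
    rw [Finset.sum_Icc_succ_top (by omega), ih, Nat.add_sub_cancel]
    abel

theorem sub_mem_Icc_of_deriv_mem_Icc_s3 {f : ℝ → ℝ} (hf : Differentiable ℝ f) {a b m m' : ℝ}
    (hf' : ∀ x ∈ Icc a b, deriv f x ∈ Icc m m') {u v : ℝ} (hu : u ∈ Icc a b) (hv : v ∈ Icc a b)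
    (huv : u ≤ v) : f v - f u ∈ Icc (m * (v - u)) (m' * (v - u)) :=
  ⟨(convex_Icc a b).mul_sub_le_image_sub_of_le_deriv hf.continuous.continuousOn
      hf.differentiableOn (fun x hx => (hf' x (interior_subset hx)).1) u hu v hv huv,
    (convex_Icc a b).image_sub_le_mul_sub_of_deriv_le hf.continuous.continuousOn
      hf.differentiableOn (fun x hx => (hf' x (interior_subset hx)).2) u hu v hv huv⟩

theorem ContDiff.sub_mem_Icc_of_partial_deriv_mem_Icc {F : ℝ → ℝ → ℝ}
    (hF : ContDiff ℝ 1 (Function.uncurry F)) {a b c d m₁ m₁' m₂ m₂' : ℝ}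
    (h₁ : ∀ u ∈ Icc a b, ∀ w ∈ Icc c d, deriv (fun u' => F u' w) u ∈ Icc m₁ m₁')
    (h₂ : ∀ u ∈ Icc a b, ∀ w ∈ Icc c d, deriv (fun w' => F u w') w ∈ Icc m₂ m₂')
    {u u' w w' : ℝ} (hu : u ∈ Icc a b) (hu' : u' ∈ Icc a b) (hw : w ∈ Icc c d)
    (hw' : w' ∈ Icc c d) (huu' : u ≤ u') (hww' : w ≤ w') :
    F u' w' - F u w ∈ Icc (m₁ * (u' - u) + m₂ * (w' - w)) (m₁' * (u' - u) + m₂' * (w' - w)) := by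
  have hdiff := hF.differentiable one_ne_zero
  have hfst := sub_mem_Icc_of_deriv_mem_Icc_s3
    (hdiff.comp (differentiable_id.prodMk (differentiable_const w))) (h₁ · · w hw) hu hu' huu'
  have hsnd := sub_mem_Icc_of_deriv_mem_Icc_s3
    (hdiff.comp ((differentiable_const u').prodMk differentiable_id)) (h₂ u' hu') hw hw' hww'
  simp only [Function.comp_def, Function.uncurry_apply_pair, id_eq, mem_Icc] at hfst hsnd ⊢
  constructor <;> linarith [hfst.1, hfst.2, hsnd.1, hsnd.2]

def densityBox (M : ℕ) (R : ℕ → ℝ) : Set (ℕ → ℝ) :=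
  {ρ | ∀ j, 1 ≤ j → j ≤ M → ρ j ∈ Icc 0 (R j)}

theorem sup_mem_densityBox {M : ℕ} {R : ℕ → ℝ} {ρ σ : ℕ → ℝ} (hρ : ρ ∈ densityBox M R)
    (hσ : σ ∈ densityBox M R) : ρ ⊔ σ ∈ densityBox M R := fun j hj hjM =>
  ⟨le_sup_of_le_left (hρ j hj hjM).1, sup_le (hρ j hj hjM).2 (hσ j hj hjM).2⟩

section LaneExchange

variable {M : ℕ} {S : ℕ → ℝ → ℝ → ℝ} {g T : (ℕ → ℝ) → ℕ → ℝ}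

theorem flux_sub_mem_Icc {R : ℕ → ℝ} {𝒮 : ℝ} (h𝒮 : 0 ≤ 𝒮)
    (hS0 : ∀ u w, S 0 u w = 0) (hSM : ∀ u w, S M u w = 0)
    (hSC1 : ∀ j, 1 ≤ j → j ≤ M - 1 → ContDiff ℝ 1 (Function.uncurry (S j)))
    (hS1 : ∀ j, 1 ≤ j → j ≤ M - 1 → ∀ u ∈ Icc (0:ℝ) (R j), ∀ w ∈ Icc (0:ℝ) (R (j+1)),
      deriv (fun u' => S j u' w) u ∈ Icc (0:ℝ) 𝒮)
    (hS2 : ∀ j, 1 ≤ j → j ≤ M - 1 → ∀ u ∈ Icc (0:ℝ) (R j), ∀ w ∈ Icc (0:ℝ) (R (j+1)),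
      deriv (fun w' => S j u w') w ∈ Icc (-𝒮) (0:ℝ))
    {k : ℕ} (hk : k ≤ M) {ρ σ : ℕ → ℝ} (hρ : ρ ∈ densityBox M R) (hσ : σ ∈ densityBox M R)
    (hρσ : ρ ≤ σ) :
    S k (σ k) (σ (k+1)) - S k (ρ k) (ρ (k+1)) ∈
      Icc (-𝒮 * (σ (k+1) - ρ (k+1))) (𝒮 * (σ k - ρ k)) := by
  have hzero : (0 : ℝ) ∈ Icc (-𝒮 * (σ (k+1) - ρ (k+1))) (𝒮 * (σ k - ρ k)) :=
    ⟨by nlinarith [hρσ (k+1)], mul_nonneg h𝒮 (sub_nonneg.2 (hρσ k))⟩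
  obtain rfl | rfl | ⟨hk1, hkM⟩ : k = 0 ∨ k = M ∨ (1 ≤ k ∧ k ≤ M - 1) := by omega
  · rwa [hS0, hS0, sub_self]
  · rwa [hSM, hSM, sub_self]
  · have hmem := (hSC1 k hk1 hkM).sub_mem_Icc_of_partial_deriv_mem_Icc (hS1 k hk1 hkM)
      (hS2 k hk1 hkM) (hρ k hk1 hk) (hσ k hk1 hk) (hρ (k+1) (by omega) (by omega))
      (hσ (k+1) (by omega) (by omega)) (hρσ k) (hρσ (k+1))
    simpa only [zero_mul, zero_add, add_zero] using hmem

theorem sum_relaxation_step_eq {lam : ℝ} (hS0 : ∀ u w, S 0 u w = 0) (hSM : ∀ u w, S M u w = 0)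
    (hg : ∀ ρ j, g ρ j = S (j-1) (ρ (j-1)) (ρ j) - S j (ρ j) (ρ (j+1)))
    (hT : ∀ ρ j, T ρ j = ρ j + lam * g ρ j) (ρ : ℕ → ℝ) :
    ∑ j ∈ Finset.Icc 1 M, T ρ j = ∑ j ∈ Finset.Icc 1 M, ρ j := by
  have hexchange : ∑ j ∈ Finset.Icc 1 M, g ρ j = 0 :=
    calc ∑ j ∈ Finset.Icc 1 M, g ρ j
        = ∑ j ∈ Finset.Icc 1 M, (S (j-1) (ρ (j-1)) (ρ (j-1+1)) - S j (ρ j) (ρ (j+1))) :=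
          Finset.sum_congr rfl fun j hj => by rw [hg, Nat.sub_add_cancel (Finset.mem_Icc.1 hj).1]
      _ = S 0 (ρ 0) (ρ 1) - S M (ρ M) (ρ (M+1)) :=
          Finset.sum_Icc_one_sub_eq (fun k => S k (ρ k) (ρ (k+1))) M
      _ = 0 := by rw [hS0, hSM, sub_self]
  simp only [hT, Finset.sum_add_distrib, ← Finset.mul_sum, hexchange, mul_zero, add_zero]

theorem relaxation_step_le_of_le {R : ℕ → ℝ} {𝒮 lam : ℝ} (h𝒮 : 0 ≤ 𝒮) (hlam : 0 ≤ lam)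
    (hlam𝒮 : 2 * lam * 𝒮 ≤ 1)
    (hS0 : ∀ u w, S 0 u w = 0) (hSM : ∀ u w, S M u w = 0)
    (hSC1 : ∀ j, 1 ≤ j → j ≤ M - 1 → ContDiff ℝ 1 (Function.uncurry (S j)))
    (hS1 : ∀ j, 1 ≤ j → j ≤ M - 1 → ∀ u ∈ Icc (0:ℝ) (R j), ∀ w ∈ Icc (0:ℝ) (R (j+1)),
      deriv (fun u' => S j u' w) u ∈ Icc (0:ℝ) 𝒮)
    (hS2 : ∀ j, 1 ≤ j → j ≤ M - 1 → ∀ u ∈ Icc (0:ℝ) (R j), ∀ w ∈ Icc (0:ℝ) (R (j+1)),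
      deriv (fun w' => S j u w') w ∈ Icc (-𝒮) (0:ℝ))
    (hg : ∀ ρ j, g ρ j = S (j-1) (ρ (j-1)) (ρ j) - S j (ρ j) (ρ (j+1)))
    (hT : ∀ ρ j, T ρ j = ρ j + lam * g ρ j)
    {ρ σ : ℕ → ℝ} (hρ : ρ ∈ densityBox M R) (hσ : σ ∈ densityBox M R) (hρσ : ρ ≤ σ)
    {j : ℕ} (hj : j ∈ Finset.Icc 1 M) : T ρ j ≤ T σ j := by
  obtain ⟨hj1, hjM⟩ := Finset.mem_Icc.1 hj
  have hin := flux_sub_mem_Icc h𝒮 hS0 hSM hSC1 hS1 hS2 (k := j - 1) (by omega) hρ hσ hρσ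
  have hout := flux_sub_mem_Icc h𝒮 hS0 hSM hSC1 hS1 hS2 hjM hρ hσ hρσ
  rw [Nat.sub_add_cancel hj1] at hin
  have hδ : 0 ≤ σ j - ρ j := sub_nonneg.2 (hρσ j)
  rw [hT, hT, hg, hg, ← sub_nonneg]
  nlinarith [mul_le_mul_of_nonneg_left hin.1 hlam, mul_le_mul_of_nonneg_left hout.2 hlam,
    mul_nonneg (sub_nonneg.2 hlam𝒮) hδ]

end LaneExchange

theorem relaxation_step_l1_contraction_general
(M : ℕ)
    (R : ℕ → ℝ)
    (𝒮 τ Δt : ℝ) (h𝒮 : 0 < 𝒮) (hτ : 0 < τ) (hΔt : 0 < Δt)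
    (hΔtτ : Δt ≤ τ / (2 * 𝒮))
    (S : ℕ → ℝ → ℝ → ℝ)
    (hS0 : ∀ u w, S 0 u w = 0)
    (hSM : ∀ u w, S M u w = 0)
    (hSC1 : ∀ j, 1 ≤ j → j ≤ M - 1 → ContDiff ℝ 1 (Function.uncurry (S j)))
    (hS1 : ∀ j, 1 ≤ j → j ≤ M - 1 → ∀ u ∈ Icc (0:ℝ) (R j), ∀ w ∈ Icc (0:ℝ) (R (j+1)),
      deriv (fun u' => S j u' w) u ∈ Icc (0:ℝ) 𝒮)
    (hS2 : ∀ j, 1 ≤ j → j ≤ M - 1 → ∀ u ∈ Icc (0:ℝ) (R j), ∀ w ∈ Icc (0:ℝ) (R (j+1)),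
      deriv (fun w' => S j u w') w ∈ Icc (-𝒮) (0:ℝ))
    (g : (ℕ → ℝ) → ℕ → ℝ)
    (hg : ∀ ρ j, g ρ j = S (j-1) (ρ (j-1)) (ρ j) - S j (ρ j) (ρ (j+1)))
    (T : (ℕ → ℝ) → ℕ → ℝ)
    (hT : ∀ ρ j, T ρ j = ρ j + (Δt / τ) * g ρ j)
    (ρ σ : ℕ → ℝ)
    (hρ : ∀ j, 1 ≤ j → j ≤ M → ρ j ∈ Icc (0:ℝ) (R j))
    (hσ : ∀ j, 1 ≤ j → j ≤ M → σ j ∈ Icc (0:ℝ) (R j)) :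
    ∑ j ∈ Finset.Icc 1 M, |T ρ j - T σ j| ≤ ∑ j ∈ Finset.Icc 1 M, |ρ j - σ j| := by
  have hlam : 0 ≤ Δt / τ := by positivity
  have hlam𝒮 : 2 * (Δt / τ) * 𝒮 ≤ 1 := by
    rw [le_div_iff₀ (by positivity)] at hΔtτ
    rw [show 2 * (Δt / τ) * 𝒮 = Δt * (2 * 𝒮) / τ by ring, div_le_one hτ]
    exact hΔtτ
  exact Finset.sum_abs_sub_le_of_monotone_of_sum_eq (T := T) (Finset.Icc 1 M)
    (fun _ h _ h' => sup_mem_densityBox h h')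
    (fun _ hρ' _ hσ' hle _ hj => relaxation_step_le_of_le h𝒮.le hlam hlam𝒮 hS0 hSM hSC1 hS1 hS2
      hg hT hρ' hσ' hle hj)
    (fun ρ' _ => sum_relaxation_step_eq hS0 hSM hg hT ρ') hρ hσ

/-- Pointwise core of the contraction estimate (FL2) in the proof of Lemma 3.2:
the relaxation step is an ℓ¹-contraction on the box of admissible densities. -/
theorem relaxation_step_l1_contraction
(M : ℕ) (hM : 1 ≤ M)
    (R : ℕ → ℝ) (hR : ∀ j, 1 ≤ j → j ≤ M → 0 < R j)
    (𝒮 τ Δt : ℝ) (h𝒮 : 0 < 𝒮) (hτ : 0 < τ) (hΔt : 0 < Δt)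
    (hΔtτ : Δt ≤ τ / (2 * 𝒮))
    (S : ℕ → ℝ → ℝ → ℝ)
    (hS0 : ∀ u w, S 0 u w = 0)
    (hSM : ∀ u w, S M u w = 0)
    (hSC1 : ∀ j, 1 ≤ j → j ≤ M - 1 → ContDiff ℝ 1 (Function.uncurry (S j)))
    (hS1 : ∀ j, 1 ≤ j → j ≤ M - 1 → ∀ u ∈ Icc (0:ℝ) (R j), ∀ w ∈ Icc (0:ℝ) (R (j+1)),
      deriv (fun u' => S j u' w) u ∈ Icc (0:ℝ) 𝒮)
    (hS2 : ∀ j, 1 ≤ j → j ≤ M - 1 → ∀ u ∈ Icc (0:ℝ) (R j), ∀ w ∈ Icc (0:ℝ) (R (j+1)),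
      deriv (fun w' => S j u w') w ∈ Icc (-𝒮) (0:ℝ))
    (hS00 : ∀ j, 1 ≤ j → j ≤ M - 1 → S j 0 0 = 0)
    (hSRR : ∀ j, 1 ≤ j → j ≤ M - 1 → S j (R j) (R (j+1)) = 0)
    (g : (ℕ → ℝ) → ℕ → ℝ)
    (hg : ∀ ρ j, g ρ j = S (j-1) (ρ (j-1)) (ρ j) - S j (ρ j) (ρ (j+1)))
    (T : (ℕ → ℝ) → ℕ → ℝ)
    (hT : ∀ ρ j, T ρ j = ρ j + (Δt / τ) * g ρ j)
    (ρ σ : ℕ → ℝ)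
    (hρ : ∀ j, 1 ≤ j → j ≤ M → ρ j ∈ Icc (0:ℝ) (R j))
    (hσ : ∀ j, 1 ≤ j → j ≤ M → σ j ∈ Icc (0:ℝ) (R j)) :
    ∑ j ∈ Finset.Icc 1 M, |T ρ j - T σ j| ≤ ∑ j ∈ Finset.Icc 1 M, |ρ j - σ j| :=
  relaxation_step_l1_contraction_general M R 𝒮 τ Δt h𝒮 hτ hΔt hΔtτ S hS0 hSM hSC1 hS1 hS2 g hg T hT
    ρ σ hρ hσ
end

section
/- Under the stated assumptions, the relaxation step does not increase the total spatial variation summed over the lanes: if ρ : ℝ → ∏_{j=1}^M [0,R_j] is a function each of whose components ρ_j has finite total variation over ℝ (total variation being the supremum of ∑_k |ρ_j(x_{k+1}) − ρ_j(x_k)| over all finite increasing sequences x_1 < … < x_n), then ∑_{j=1}^M TV(x ↦ T_j(ρ(x))) ≤ ∑_{j=1}^M TV(ρ_j). (Total-variation bound for the source splitting step established in the proof of Lemma 2.4.) -/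
/-!
By the mean value theorem, each flux difference `S j (ρ j) (ρ (j+1)) - S j (σ j) (σ (j+1))` equals
`a j * (ρ j - σ j) + b j * (ρ (j+1) - σ (j+1))` with `a j ∈ [0, 𝒮]` and `b j ∈ [-𝒮, 0]`. Under the
CFL condition `Δt 𝒮 / τ ≤ 1/2`, `T ρ j - T σ j` is then a combination of `ρ - σ` at the lanes
`j - 1`, `j`, `j + 1` with nonnegative coefficients, and after summing over the lanes these weights
telescope, so `T` does not increase the `ℓ¹` distance across lanes. A pointwise `ℓ¹` bound passes
to total variations: on a finite set the variation is the sum over consecutive points, and on any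
set it is the directed supremum of the variations on its finite subsets.
-/

open Set

section Variation

variable {α E F : Type*} [LinearOrder α] [PseudoEMetricSpace E] [PseudoEMetricSpace F]

theorem eVariationOn_insert_of_isGreatest (f : α → E) {s : Set α} {m a : α}
    (hm : IsGreatest s m) (hma : m ≤ a) :
    eVariationOn f (insert a s) = eVariationOn f s + edist (f m) (f a) := by
  have hs : insert a s = s ∪ {m, a} := by
    rw [union_insert, union_singleton, insert_eq_of_mem (mem_insert_of_mem a hm.1)]
  rw [hs, eVariationOn.union f hm ⟨mem_insert m {a}, by simp [lowerBounds, hma]⟩,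
    eVariationOn.pair]

theorem eVariationOn_eq_iSup_finset (f : α → E) (s : Set α) :
    eVariationOn f s = ⨆ t : {t : Finset α // ↑t ⊆ s}, eVariationOn f t := by
  classical
  refine le_antisymm (iSup_le fun ⟨n, u, hu, us⟩ ↦ ?_) (iSup_le fun t ↦ eVariationOn.mono f t.2)
  have hsub : ↑((Finset.range (n + 1)).image u) ⊆ s := by simp [Set.subset_def, us]
  refine le_iSup_of_le ⟨_, hsub⟩ <| eVariationOn.sum_le_of_monotoneOn_Iic (hu.monotoneOn _)
    fun i hi ↦ ?_
  simpa using ⟨i, by omega, rfl⟩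

theorem sum_eVariationOn_finset_le_of_sum_edist_le {ι : Type*} (J : Finset ι)
    (f : ι → α → E) (g : ι → α → F) (t : Finset α)
    (h : ∀ x ∈ t, ∀ y ∈ t, ∑ j ∈ J, edist (g j x) (g j y) ≤ ∑ j ∈ J, edist (f j x) (f j y)) :
    ∑ j ∈ J, eVariationOn (g j) t ≤ ∑ j ∈ J, eVariationOn (f j) t := by
  classical
  induction t using Finset.induction_on_max with
  | empty => simp [eVariationOn.subsingleton]
  | insert a t hlt ih =>
    rcases t.eq_empty_or_nonempty with rfl | ht
    · simp [eVariationOn.subsingleton]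
    have hm := t.isGreatest_max' ht
    have hma := (hlt _ (t.max'_mem ht)).le
    rw [Finset.coe_insert]
    simp only [eVariationOn_insert_of_isGreatest _ hm hma, Finset.sum_add_distrib]
    exact add_le_add
      (ih fun x hx y hy ↦ h x (Finset.mem_insert_of_mem hx) y (Finset.mem_insert_of_mem hy))
      (h _ (Finset.mem_insert_of_mem (t.max'_mem ht)) a (Finset.mem_insert_self a t))

theorem sum_eVariationOn_le_of_sum_edist_le {ι : Type*} (J : Finset ι)
    (f : ι → α → E) (g : ι → α → F) (s : Set α)
    (h : ∀ x ∈ s, ∀ y ∈ s, ∑ j ∈ J, edist (g j x) (g j y) ≤ ∑ j ∈ J, edist (f j x) (f j y)) :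
    ∑ j ∈ J, eVariationOn (g j) s ≤ ∑ j ∈ J, eVariationOn (f j) s := by
  classical
  simp_rw [eVariationOn_eq_iSup_finset (g _) s]
  rw [ENNReal.finsetSum_iSup (f := fun j (t : {t : Finset α // ↑t ⊆ s}) ↦ eVariationOn (g j) t)
    fun t₁ t₂ ↦ ⟨⟨t₁.1 ∪ t₂.1, by simp [t₁.2, t₂.2]⟩,
    fun j ↦ ⟨eVariationOn.mono _ (by simp), eVariationOn.mono _ (by simp)⟩⟩]
  exact iSup_le fun t ↦ (sum_eVariationOn_finset_le_of_sum_edist_le J f g t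
    fun x hx y hy ↦ h x (t.2 hx) y (t.2 hy)).trans
    (Finset.sum_le_sum fun j _ ↦ eVariationOn.mono _ t.2)

end Variation

theorem sum_abs_add_mul_flux_sub_le {N : ℕ} {r : ℝ} {a b d Φ : ℕ → ℝ} (hr : 0 ≤ r)
    (ha : ∀ i, 0 ≤ a i) (hb : ∀ i, b i ≤ 0) (hcfl : ∀ i, r * (a (i + 1) - b i) ≤ 1)
    (ha0 : a 0 = 0) (hbN : b N = 0) (hΦ : ∀ i ≤ N, Φ i = a i * d i + b i * d (i + 1)) :
    ∑ i ∈ Finset.range N, |d (i + 1) + r * (Φ i - Φ (i + 1))| ≤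
      ∑ i ∈ Finset.range N, |d (i + 1)| := by
  have hterm : ∀ i < N, |d (i + 1) + r * (Φ i - Φ (i + 1))| ≤ |d (i + 1)| +
      r * ((a i * |d i| - a (i + 1) * |d (i + 1)|) +
        (b i * |d (i + 1)| - b (i + 1) * |d (i + 2)|)) := by
    intro i hi
    have hc : 0 ≤ 1 - r * (a (i + 1) - b i) := by linarith [hcfl i]
    have hp : 0 ≤ r * a i := mul_nonneg hr (ha i)
    have hq : 0 ≤ r * -b (i + 1) := mul_nonneg hr (neg_nonneg.2 (hb (i + 1)))
    calc |d (i + 1) + r * (Φ i - Φ (i + 1))|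
        = |(1 - r * (a (i + 1) - b i)) * d (i + 1) + r * a i * d i +
            r * -b (i + 1) * d (i + 2)| := by
          rw [hΦ i hi.le, hΦ (i + 1) hi]; ring_nf
      _ ≤ (1 - r * (a (i + 1) - b i)) * |d (i + 1)| + r * a i * |d i| +
            r * -b (i + 1) * |d (i + 2)| := by
          refine (abs_add_three _ _ _).trans ?_
          simp only [abs_mul, abs_of_nonneg hc, abs_of_nonneg hp, abs_of_nonneg hq, le_refl]
      _ = _ := by ring
  calc ∑ i ∈ Finset.range N, |d (i + 1) + r * (Φ i - Φ (i + 1))|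
      ≤ ∑ i ∈ Finset.range N, (|d (i + 1)| + r * ((a i * |d i| - a (i + 1) * |d (i + 1)|) +
          (b i * |d (i + 1)| - b (i + 1) * |d (i + 2)|))) :=
        Finset.sum_le_sum fun i hi ↦ hterm i (Finset.mem_range.1 hi)
    _ = ∑ i ∈ Finset.range N, |d (i + 1)| +
          r * ((a 0 * |d 0| - a N * |d N|) + (b 0 * |d 1| - b N * |d (N + 1)|)) := by
        rw [Finset.sum_add_distrib, ← Finset.mul_sum, Finset.sum_add_distrib,
          Finset.sum_range_sub' (fun i ↦ a i * |d i|),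
          Finset.sum_range_sub' (fun i ↦ b i * |d (i + 1)|)]
    _ ≤ ∑ i ∈ Finset.range N, |d (i + 1)| := by
        rw [ha0, hbN]
        nlinarith [mul_nonneg hr (mul_nonneg (ha N) (abs_nonneg (d N))),
          mul_nonneg hr (mul_nonneg (neg_nonneg.2 (hb 0)) (abs_nonneg (d 1)))]

theorem exists_mem_uIcc_sub_eq_deriv_mul {f : ℝ → ℝ} (hf : Differentiable ℝ f) (x y : ℝ) :
    ∃ c ∈ uIcc x y, f y - f x = deriv f c * (y - x) := by
  wlog hxy : x ≤ y generalizing x y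
  · obtain ⟨c, hc, hfc⟩ := this y x (le_of_not_ge hxy)
    exact ⟨c, uIcc_comm x y ▸ hc, by linarith⟩
  rcases hxy.eq_or_lt with rfl | hlt
  · exact ⟨x, left_mem_uIcc, by ring⟩
  obtain ⟨c, hc, hfc⟩ := exists_deriv_eq_slope f hlt hf.continuous.continuousOn
    fun z _ ↦ (hf z).differentiableWithinAt
  refine ⟨c, Icc_subset_uIcc (Ioo_subset_Icc_self hc), ?_⟩
  rw [hfc, div_mul_cancel₀ _ (sub_ne_zero.2 hlt.ne')]

theorem exists_sub_eq_mul_add_mul_of_deriv_mem {F : ℝ → ℝ → ℝ}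
    (hF : Differentiable ℝ (Function.uncurry F)) {I J A B : Set ℝ} (hI : I.OrdConnected)
    (hJ : J.OrdConnected) (hA : ∀ u ∈ I, ∀ w ∈ J, deriv (fun u' ↦ F u' w) u ∈ A)
    (hB : ∀ u ∈ I, ∀ w ∈ J, deriv (fun w' ↦ F u w') w ∈ B) {p₁ q₁ p₂ q₂ : ℝ}
    (hp₁ : p₁ ∈ I) (hq₁ : q₁ ∈ I) (hp₂ : p₂ ∈ J) (hq₂ : q₂ ∈ J) :
    ∃ a ∈ A, ∃ b ∈ B, F p₁ p₂ - F q₁ q₂ = a * (p₁ - q₁) + b * (p₂ - q₂) := by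
  obtain ⟨c₁, hc₁, h₁⟩ := exists_mem_uIcc_sub_eq_deriv_mul
    (hF.comp (differentiable_id.prodMk (differentiable_const p₂))) q₁ p₁
  obtain ⟨c₂, hc₂, h₂⟩ := exists_mem_uIcc_sub_eq_deriv_mul
    (hF.comp ((differentiable_const q₁).prodMk differentiable_id)) q₂ p₂
  refine ⟨_, hA c₁ (hI.uIcc_subset hq₁ hp₁ hc₁) p₂ hp₂,
    _, hB q₁ hq₁ c₂ (hJ.uIcc_subset hq₂ hp₂ hc₂), ?_⟩
  simp only [Function.comp_def, Function.uncurry_apply_pair, id] at h₁ h₂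
  linarith

def relaxStep (r : ℝ) (S : ℕ → ℝ → ℝ → ℝ) (ρ : ℕ → ℝ) (j : ℕ) : ℝ :=
  ρ j + r * (S (j - 1) (ρ (j - 1)) (ρ j) - S j (ρ j) (ρ (j + 1)))

theorem sum_abs_relaxStep_sub_le {M : ℕ} {R : ℕ → ℝ} {𝒮 r : ℝ} {S : ℕ → ℝ → ℝ → ℝ}
    (hr : 0 ≤ r) (hr𝒮 : r * 𝒮 ≤ 1 / 2)
    (hS0 : ∀ u w, S 0 u w = 0) (hSM : ∀ u w, S M u w = 0)
    (hSd : ∀ j, 1 ≤ j → j ≤ M - 1 → Differentiable ℝ (Function.uncurry (S j)))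
    (hS1 : ∀ j, 1 ≤ j → j ≤ M - 1 → ∀ u ∈ Icc (0:ℝ) (R j), ∀ w ∈ Icc (0:ℝ) (R (j+1)),
      deriv (fun u' => S j u' w) u ∈ Icc (0:ℝ) 𝒮)
    (hS2 : ∀ j, 1 ≤ j → j ≤ M - 1 → ∀ u ∈ Icc (0:ℝ) (R j), ∀ w ∈ Icc (0:ℝ) (R (j+1)),
      deriv (fun w' => S j u w') w ∈ Icc (-𝒮) (0:ℝ))
    {ρ σ : ℕ → ℝ} (hρ : ∀ j, 1 ≤ j → j ≤ M → ρ j ∈ Icc (0:ℝ) (R j))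
    (hσ : ∀ j, 1 ≤ j → j ≤ M → σ j ∈ Icc (0:ℝ) (R j)) :
    ∑ j ∈ Finset.Icc 1 M, |relaxStep r S ρ j - relaxStep r S σ j| ≤
      ∑ j ∈ Finset.Icc 1 M, |ρ j - σ j| := by
  set d : ℕ → ℝ := fun j ↦ ρ j - σ j
  set Φ : ℕ → ℝ := fun j ↦ S j (ρ j) (ρ (j + 1)) - S j (σ j) (σ (j + 1))
  have hcoef : ∀ j, ∃ a b : ℝ, (0 ≤ a ∧ r * a ≤ 1 / 2) ∧ (b ≤ 0 ∧ r * -b ≤ 1 / 2) ∧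
      (¬(1 ≤ j ∧ j ≤ M - 1) → a = 0 ∧ b = 0) ∧ (j ≤ M → Φ j = a * d j + b * d (j + 1)) := by
    intro j
    by_cases hj : 1 ≤ j ∧ j ≤ M - 1
    · obtain ⟨a, ha, b, hb, hab⟩ := exists_sub_eq_mul_add_mul_of_deriv_mem (hSd j hj.1 hj.2)
        ordConnected_Icc ordConnected_Icc (hS1 j hj.1 hj.2) (hS2 j hj.1 hj.2)
        (hρ j hj.1 (by omega)) (hσ j hj.1 (by omega))
        (hρ (j + 1) (by omega) (by omega)) (hσ (j + 1) (by omega) (by omega))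
      refine ⟨a, b, ⟨ha.1, ?_⟩, ⟨hb.2, ?_⟩, fun h ↦ absurd hj h, fun _ ↦ hab⟩
      · nlinarith [mul_le_mul_of_nonneg_left ha.2 hr]
      · nlinarith [mul_le_mul_of_nonneg_left (neg_le.1 hb.1) hr]
    · refine ⟨0, 0, by norm_num, by norm_num, fun _ ↦ ⟨rfl, rfl⟩, fun hjM ↦ ?_⟩
      obtain rfl | rfl : j = 0 ∨ j = M := by omega
      · simp [Φ, hS0]
      · simp [Φ, hSM]
  choose a b ha hb hab0 hΦ using hcoef
  have hstep : ∀ i, relaxStep r S ρ (i + 1) - relaxStep r S σ (i + 1) =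
      d (i + 1) + r * (Φ i - Φ (i + 1)) := fun i ↦ by
    simp only [relaxStep, d, Φ, Nat.add_sub_cancel]; ring
  rw [← Finset.Ico_add_one_right_eq_Icc, Finset.sum_Ico_eq_sum_range, Finset.sum_Ico_eq_sum_range]
  simp only [Nat.add_sub_cancel, add_comm 1, hstep]
  exact sum_abs_add_mul_flux_sub_le hr (fun i ↦ (ha i).1) (fun i ↦ (hb i).1)
    (fun i ↦ by nlinarith [(ha (i + 1)).2, (hb i).2]) (hab0 0 (by omega)).1
    (hab0 M (by omega)).2 hΦ

theorem relaxation_step_TV_bound_general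
(M : ℕ)
    (R : ℕ → ℝ)
    (𝒮 τ Δt : ℝ) (h𝒮 : 0 < 𝒮) (hτ : 0 < τ) (hΔt : 0 < Δt)
    (hΔtτ : Δt ≤ τ / (2 * 𝒮))
    (S : ℕ → ℝ → ℝ → ℝ)
    (hS0 : ∀ u w, S 0 u w = 0)
    (hSM : ∀ u w, S M u w = 0)
    (hSC1 : ∀ j, 1 ≤ j → j ≤ M - 1 → ContDiff ℝ 1 (Function.uncurry (S j)))
    (hS1 : ∀ j, 1 ≤ j → j ≤ M - 1 → ∀ u ∈ Icc (0:ℝ) (R j), ∀ w ∈ Icc (0:ℝ) (R (j+1)),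
      deriv (fun u' => S j u' w) u ∈ Icc (0:ℝ) 𝒮)
    (hS2 : ∀ j, 1 ≤ j → j ≤ M - 1 → ∀ u ∈ Icc (0:ℝ) (R j), ∀ w ∈ Icc (0:ℝ) (R (j+1)),
      deriv (fun w' => S j u w') w ∈ Icc (-𝒮) (0:ℝ))
    (g : (ℕ → ℝ) → ℕ → ℝ)
    (hg : ∀ ρ j, g ρ j = S (j-1) (ρ (j-1)) (ρ j) - S j (ρ j) (ρ (j+1)))
    (T : (ℕ → ℝ) → ℕ → ℝ)
    (hT : ∀ ρ j, T ρ j = ρ j + (Δt / τ) * g ρ j)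
    (ρ : ℝ → ℕ → ℝ)
    (hρbox : ∀ x, ∀ j, 1 ≤ j → j ≤ M → ρ x j ∈ Icc (0:ℝ) (R j)) :
    ∑ j ∈ Finset.Icc 1 M, eVariationOn (fun x => T (ρ x) j) univ
      ≤ ∑ j ∈ Finset.Icc 1 M, eVariationOn (fun x => ρ x j) univ := by
  have hr : 0 ≤ Δt / τ := (div_pos hΔt hτ).le
  have hr𝒮 : Δt / τ * 𝒮 ≤ 1 / 2 := by
    rw [le_div_iff₀ (by positivity)] at hΔtτ
    rw [div_mul_eq_mul_div, div_le_div_iff₀ hτ two_pos]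
    linarith
  have hT_eq : ∀ ρ, T ρ = relaxStep (Δt / τ) S ρ := fun ρ ↦ funext fun j ↦ by
    rw [hT, hg, relaxStep]
  refine sum_eVariationOn_le_of_sum_edist_le _ _ _ _ fun x _ y _ ↦ ?_
  simp only [hT_eq, edist_dist, Real.dist_eq]
  rw [← ENNReal.ofReal_sum_of_nonneg fun _ _ ↦ abs_nonneg _,
    ← ENNReal.ofReal_sum_of_nonneg fun _ _ ↦ abs_nonneg _]
  exact ENNReal.ofReal_le_ofReal <| sum_abs_relaxStep_sub_le hr hr𝒮 hS0 hSM
    (fun j hj hjM ↦ (hSC1 j hj hjM).differentiable one_ne_zero) hS1 hS2 (hρbox x) (hρbox y)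

/-- Total-variation bound for the source splitting step (proof of Lemma 2.4):
the relaxation step does not increase the total spatial variation summed over
the lanes. -/
theorem relaxation_step_TV_bound
(M : ℕ) (hM : 1 ≤ M)
    (R : ℕ → ℝ) (hR : ∀ j, 1 ≤ j → j ≤ M → 0 < R j)
    (𝒮 τ Δt : ℝ) (h𝒮 : 0 < 𝒮) (hτ : 0 < τ) (hΔt : 0 < Δt)
    (hΔtτ : Δt ≤ τ / (2 * 𝒮))
    (S : ℕ → ℝ → ℝ → ℝ)
    (hS0 : ∀ u w, S 0 u w = 0)
    (hSM : ∀ u w, S M u w = 0)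
    (hSC1 : ∀ j, 1 ≤ j → j ≤ M - 1 → ContDiff ℝ 1 (Function.uncurry (S j)))
    (hS1 : ∀ j, 1 ≤ j → j ≤ M - 1 → ∀ u ∈ Icc (0:ℝ) (R j), ∀ w ∈ Icc (0:ℝ) (R (j+1)),
      deriv (fun u' => S j u' w) u ∈ Icc (0:ℝ) 𝒮)
    (hS2 : ∀ j, 1 ≤ j → j ≤ M - 1 → ∀ u ∈ Icc (0:ℝ) (R j), ∀ w ∈ Icc (0:ℝ) (R (j+1)),
      deriv (fun w' => S j u w') w ∈ Icc (-𝒮) (0:ℝ))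
    (hS00 : ∀ j, 1 ≤ j → j ≤ M - 1 → S j 0 0 = 0)
    (hSRR : ∀ j, 1 ≤ j → j ≤ M - 1 → S j (R j) (R (j+1)) = 0)
    (g : (ℕ → ℝ) → ℕ → ℝ)
    (hg : ∀ ρ j, g ρ j = S (j-1) (ρ (j-1)) (ρ j) - S j (ρ j) (ρ (j+1)))
    (T : (ℕ → ℝ) → ℕ → ℝ)
    (hT : ∀ ρ j, T ρ j = ρ j + (Δt / τ) * g ρ j)
    (ρ : ℝ → ℕ → ℝ)
    (hρbox : ∀ x, ∀ j, 1 ≤ j → j ≤ M → ρ x j ∈ Icc (0:ℝ) (R j))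
    (hBV : ∀ j, 1 ≤ j → j ≤ M → BoundedVariationOn (fun x => ρ x j) univ) :
    ∑ j ∈ Finset.Icc 1 M, eVariationOn (fun x => T (ρ x) j) univ
      ≤ ∑ j ∈ Finset.Icc 1 M, eVariationOn (fun x => ρ x j) univ :=
  relaxation_step_TV_bound_general M R 𝒮 τ Δt h𝒮 hτ hΔt hΔtτ S hS0 hSM hSC1 hS1 hS2 g hg T hT ρ
    hρbox
end

section
/- Under the stated assumptions, the ℓ¹ norm of the lane-exchange source vector does not increase under the relaxation step: for every ρ ∈ ∏_{j=1}^M [0,R_j], one has ∑_{j=1}^M |g_j(T(ρ))| ≤ ∑_{j=1}^M |g_j(ρ)|. (This is the key telescoping estimate ∑_j g_{j,i}^+ ≤ ∑_j g_{j,i}^− in the proof of Lemma 2.5, giving the time-Lipschitz estimate for the approximate solutions.) -/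
/-!
By the mean value theorem each flux changes under `ρ ↦ ρ'` by
`a_j (ρ'_j - ρ_j) - b_j (ρ'_{j+1} - ρ_{j+1})` with `a_j, b_j ∈ [0, 𝒮]`. Since `ρ' - ρ = κ g` with
`κ = Δt / τ`, the new source is
`g'_j = (1 - κ (b_{j-1} + a_j)) g_j + κ a_{j-1} g_{j-1} + κ b_j g_{j+1}`,
a combination with nonnegative coefficients (as `2 𝒮 κ ≤ 1`) in which every `g_k` has total weight
at most one, so the triangle inequality and a telescoping sum bound `∑ |g'_j|` by `∑ |g_j|`.
The mean value theorem may be applied along the segment from `ρ` to `ρ'` because the step keeps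
`ρ` in the box: the fluxes vanish at the corners `(0, 0)` and `(R_j, R_{j+1})`, which gives
`-2 𝒮 ρ_j ≤ g_j ≤ 2 𝒮 (R_j - ρ_j)`.
-/

open Set

lemma exists_sub_eq_mul_sub_of_deriv_mem {f : ℝ → ℝ} {s I : Set ℝ} (hs : s.OrdConnected)
    (hf : DifferentiableOn ℝ f s) (hI : ∀ c ∈ s, deriv f c ∈ I) {x y : ℝ} (hx : x ∈ s)
    (hy : y ∈ s) : ∃ a ∈ I, f y - f x = a * (y - x) := by
  wlog hxy : x ≤ y generalizing x y
  · obtain ⟨a, ha, h⟩ := this hy hx (le_of_not_ge hxy)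
    exact ⟨a, ha, by linear_combination -h⟩
  rcases hxy.eq_or_lt with rfl | hlt
  · exact ⟨deriv f x, hI x hx, by ring⟩
  have hsub : Icc x y ⊆ s := hs.out hx hy
  obtain ⟨c, hc, hslope⟩ := exists_deriv_eq_slope f hlt (hf.mono hsub).continuousOn
    ((hf.mono hsub).mono Ioo_subset_Icc_self)
  refine ⟨deriv f c, hI c (hsub (Ioo_subset_Icc_self hc)), ?_⟩
  rw [hslope, div_mul_cancel₀ _ (sub_ne_zero.2 hlt.ne')]

lemma sum_Icc_one_sub_pred (F : ℕ → ℝ) (M : ℕ) :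
    ∑ j ∈ Finset.Icc 1 M, (F j - F (j - 1)) = F M - F 0 := by
  induction M with
  | zero => simp
  | succ n ih =>
    rw [Finset.sum_Icc_succ_top (by omega), ih]
    simp

lemma sum_abs_tridiagonal_update_le (M : ℕ) {g g' : ℕ → ℝ} (a b : ℕ → ℝ) (ha : ∀ j, 0 ≤ a j)
    (hb : ∀ j, 0 ≤ b j) (hab : ∀ j ∈ Finset.Icc 1 M, b (j - 1) + a j ≤ 1) (ha0 : a 0 = 0)
    (hbM : b M = 0)
    (hg' : ∀ j ∈ Finset.Icc 1 M,
      g' j = g j + (a (j - 1) * g (j - 1) - b (j - 1) * g j) - (a j * g j - b j * g (j + 1))) :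
    ∑ j ∈ Finset.Icc 1 M, |g' j| ≤ ∑ j ∈ Finset.Icc 1 M, |g j| := by
  have hterm : ∀ j ∈ Finset.Icc 1 M, |g' j| ≤ |g j| - (a j * |g j| - a (j - 1) * |g (j - 1)|)
      + (b j * |g (j + 1)| - b (j - 1) * |g j|) := by
    intro j hj
    have hc : 0 ≤ 1 - (b (j - 1) + a j) := sub_nonneg.2 (hab j hj)
    calc |g' j| = |(1 - (b (j - 1) + a j)) * g j + a (j - 1) * g (j - 1) + b j * g (j + 1)| := by
          rw [hg' j hj]; congr 1; ring
      _ ≤ |(1 - (b (j - 1) + a j)) * g j| + |a (j - 1) * g (j - 1)| + |b j * g (j + 1)| :=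
          abs_add_three _ _ _
      _ = _ := by
          rw [abs_mul, abs_mul, abs_mul, abs_of_nonneg hc, abs_of_nonneg (ha _),
            abs_of_nonneg (hb _)]
          ring
  have htel_a := sum_Icc_one_sub_pred (fun k => a k * |g k|) M
  have htel_b : ∑ j ∈ Finset.Icc 1 M, (b j * |g (j + 1)| - b (j - 1) * |g j|) =
      b M * |g (M + 1)| - b 0 * |g 1| := by
    rw [← sum_Icc_one_sub_pred (fun k => b k * |g (k + 1)|) M]
    refine Finset.sum_congr rfl fun j hj => ?_
    rw [Nat.sub_add_cancel (Finset.mem_Icc.1 hj).1]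
  calc ∑ j ∈ Finset.Icc 1 M, |g' j|
      ≤ ∑ j ∈ Finset.Icc 1 M, (|g j| - (a j * |g j| - a (j - 1) * |g (j - 1)|)
          + (b j * |g (j + 1)| - b (j - 1) * |g j|)) := Finset.sum_le_sum hterm
    _ = ∑ j ∈ Finset.Icc 1 M, |g j| - (a M * |g M| - a 0 * |g 0|)
          + (b M * |g (M + 1)| - b 0 * |g 1|) := by
          rw [Finset.sum_add_distrib, Finset.sum_sub_distrib, htel_a, htel_b]
    _ ≤ ∑ j ∈ Finset.Icc 1 M, |g j| := by
          rw [ha0, hbM]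
          nlinarith [mul_nonneg (ha M) (abs_nonneg (g M)), mul_nonneg (hb 0) (abs_nonneg (g 1))]

lemma add_mul_mem_Icc {x y R c κ : ℝ} (hx : x ∈ Icc 0 R) (hy : y ∈ Icc (-(c * x)) (c * (R - x)))
    (hκ : 0 ≤ κ) (hκc : κ * c ≤ 1) : x + κ * y ∈ Icc 0 R := by
  have hlo := mul_le_mul_of_nonneg_left hy.1 hκ
  have hhi := mul_le_mul_of_nonneg_left hy.2 hκ
  have h₁ := mul_le_mul_of_nonneg_right hκc hx.1
  have h₂ := mul_le_mul_of_nonneg_right hκc (sub_nonneg.2 hx.2)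
  constructor <;> nlinarith

structure IsMonotoneFluxOn (F : ℝ → ℝ → ℝ) (s A B : ℝ) : Prop where
  contDiff : ContDiff ℝ 1 (Function.uncurry F)
  deriv_fst_mem : ∀ u ∈ Icc 0 A, ∀ w ∈ Icc 0 B, deriv (fun u' => F u' w) u ∈ Icc 0 s
  deriv_snd_mem : ∀ u ∈ Icc 0 A, ∀ w ∈ Icc 0 B, deriv (fun w' => F u w') w ∈ Icc (-s) 0

namespace IsMonotoneFluxOn

variable {F : ℝ → ℝ → ℝ} {s A B u w u' w' : ℝ}

lemma exists_sub_eq (hF : IsMonotoneFluxOn F s A B) (hu : u ∈ Icc 0 A) (hw : w ∈ Icc 0 B)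
    (hu' : u' ∈ Icc 0 A) (hw' : w' ∈ Icc 0 B) :
    ∃ a ∈ Icc 0 s, ∃ b ∈ Icc 0 s, F u' w' - F u w = a * (u' - u) - b * (w' - w) := by
  have hd := hF.contDiff.differentiable one_ne_zero
  obtain ⟨a, ha, h₁⟩ := exists_sub_eq_mul_sub_of_deriv_mem (f := fun x => F x w) ordConnected_Icc
    (hd.comp (differentiable_id.prodMk (differentiable_const w))).differentiableOn
    (fun x hx => hF.deriv_fst_mem x hx w hw) hu hu'
  obtain ⟨b, hb, h₂⟩ := exists_sub_eq_mul_sub_of_deriv_mem (f := fun y => F u' y) ordConnected_Icc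
    (hd.comp ((differentiable_const u').prodMk differentiable_id)).differentiableOn
    (fun y hy => hF.deriv_snd_mem u' hu' y hy) hw hw'
  exact ⟨a, ha, -b, ⟨neg_nonneg.2 hb.2, by linarith [hb.1]⟩, by linear_combination h₁ + h₂⟩

lemma apply_mem_Icc (hF : IsMonotoneFluxOn F s A B) (h₀ : F 0 0 = 0) (h₁ : F A B = 0)
    (hu : u ∈ Icc 0 A) (hw : w ∈ Icc 0 B) :
    F u w ∈ Icc (-(s * (A - u))) (s * u) ∧ F u w ∈ Icc (-(s * w)) (s * (B - w)) := by
  obtain ⟨a, ha, b, hb, hlow⟩ :=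
    hF.exists_sub_eq ⟨le_rfl, hu.1.trans hu.2⟩ ⟨le_rfl, hw.1.trans hw.2⟩ hu hw
  obtain ⟨a', ha', b', hb', hhigh⟩ :=
    hF.exists_sub_eq hu hw ⟨hu.1.trans hu.2, le_rfl⟩ ⟨hw.1.trans hw.2, le_rfl⟩
  have hu₀ := hu.1
  have hw₀ := hw.1
  have hu₁ := sub_nonneg.2 hu.2
  have hw₁ := sub_nonneg.2 hw.2
  refine ⟨⟨?_, ?_⟩, ?_, ?_⟩
  · linarith [mul_le_mul_of_nonneg_right ha'.2 hu₁, mul_nonneg hb'.1 hw₁]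
  · linarith [mul_le_mul_of_nonneg_right ha.2 hu₀, mul_nonneg hb.1 hw₀]
  · linarith [mul_nonneg ha.1 hu₀, mul_le_mul_of_nonneg_right hb.2 hw₀]
  · linarith [mul_nonneg ha'.1 hu₁, mul_le_mul_of_nonneg_right hb'.2 hw₁]

end IsMonotoneFluxOn

def laneSource (S : ℕ → ℝ → ℝ → ℝ) (ρ : ℕ → ℝ) (j : ℕ) : ℝ :=
  S (j - 1) (ρ (j - 1)) (ρ j) - S j (ρ j) (ρ (j + 1))

structure IsLaneExchangeFlux (M : ℕ) (R : ℕ → ℝ) (s : ℝ) (S : ℕ → ℝ → ℝ → ℝ) : Prop where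
  zero_left : ∀ u w, S 0 u w = 0
  zero_right : ∀ u w, S M u w = 0
  monotoneFluxOn : ∀ j, 1 ≤ j → j ≤ M - 1 → IsMonotoneFluxOn (S j) s (R j) (R (j + 1))
  apply_zero_zero : ∀ j, 1 ≤ j → j ≤ M - 1 → S j 0 0 = 0
  apply_max_max : ∀ j, 1 ≤ j → j ≤ M - 1 → S j (R j) (R (j + 1)) = 0

namespace IsLaneExchangeFlux

variable {M : ℕ} {R : ℕ → ℝ} {s : ℝ} {S : ℕ → ℝ → ℝ → ℝ} {ρ ρ' : ℕ → ℝ}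

lemma laneSource_mem_Icc (hS : IsLaneExchangeFlux M R s S) (hs : 0 ≤ s)
    (hρ : ∀ j, 1 ≤ j → j ≤ M → ρ j ∈ Icc 0 (R j)) {j : ℕ} (h₁ : 1 ≤ j) (h₂ : j ≤ M) :
    laneSource S ρ j ∈ Icc (-(2 * s * ρ j)) (2 * s * (R j - ρ j)) := by
  obtain ⟨k, rfl⟩ : ∃ k, j = k + 1 := ⟨j - 1, by omega⟩
  have hρj := hρ (k + 1) h₁ h₂
  have hin : S k (ρ k) (ρ (k + 1)) ∈ Icc (-(s * ρ (k + 1))) (s * (R (k + 1) - ρ (k + 1))) := by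
    rcases Nat.eq_zero_or_pos k with rfl | hk
    · rw [hS.zero_left]
      exact ⟨by nlinarith [hρj.1], by nlinarith [hρj.2]⟩
    · exact ((hS.monotoneFluxOn k hk (by omega)).apply_mem_Icc
        (hS.apply_zero_zero k hk (by omega)) (hS.apply_max_max k hk (by omega))
        (hρ k hk (by omega)) hρj).2
  have hout : S (k + 1) (ρ (k + 1)) (ρ (k + 2)) ∈
      Icc (-(s * (R (k + 1) - ρ (k + 1)))) (s * ρ (k + 1)) := by
    rcases h₂.eq_or_lt with hM | hM
    · subst hM
      rw [hS.zero_right]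
      exact ⟨by nlinarith [hρj.2], by nlinarith [hρj.1]⟩
    · exact ((hS.monotoneFluxOn (k + 1) h₁ (by omega)).apply_mem_Icc
        (hS.apply_zero_zero (k + 1) h₁ (by omega)) (hS.apply_max_max (k + 1) h₁ (by omega)) hρj
        (hρ (k + 2) (by omega) (by omega))).1
  simp only [laneSource, Nat.add_sub_cancel]
  constructor <;> linarith [hin.1, hin.2, hout.1, hout.2]

lemma exists_sub_eq (hS : IsLaneExchangeFlux M R s S) (hs : 0 ≤ s)
    (hρ : ∀ j, 1 ≤ j → j ≤ M → ρ j ∈ Icc 0 (R j))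
    (hρ' : ∀ j, 1 ≤ j → j ≤ M → ρ' j ∈ Icc 0 (R j)) :
    ∃ a b : ℕ → ℝ, (∀ j, a j ∈ Icc 0 s) ∧ (∀ j, b j ∈ Icc 0 s) ∧ a 0 = 0 ∧ b M = 0 ∧
      ∀ j ≤ M, S j (ρ' j) (ρ' (j + 1)) - S j (ρ j) (ρ (j + 1)) =
        a j * (ρ' j - ρ j) - b j * (ρ' (j + 1) - ρ (j + 1)) := by
  have key : ∀ j, ∃ a ∈ Icc 0 s, ∃ b ∈ Icc 0 s, (j = 0 ∨ j = M → a = 0 ∧ b = 0) ∧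
      (j ≤ M → S j (ρ' j) (ρ' (j + 1)) - S j (ρ j) (ρ (j + 1)) =
        a * (ρ' j - ρ j) - b * (ρ' (j + 1) - ρ (j + 1))) := by
    intro j
    by_cases hj : 1 ≤ j ∧ j ≤ M - 1
    · obtain ⟨a, ha, b, hb, h⟩ := (hS.monotoneFluxOn j hj.1 hj.2).exists_sub_eq
        (hρ j hj.1 (by omega)) (hρ (j + 1) (by omega) (by omega))
        (hρ' j hj.1 (by omega)) (hρ' (j + 1) (by omega) (by omega))
      exact ⟨a, ha, b, hb, fun _ => by omega, fun _ => h⟩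
    · refine ⟨0, ⟨le_rfl, hs⟩, 0, ⟨le_rfl, hs⟩, fun _ => ⟨rfl, rfl⟩, fun hjM => ?_⟩
      rcases (by omega : j = 0 ∨ j = M) with rfl | rfl <;> simp [hS.zero_left, hS.zero_right]
  choose a ha b hb hzero h using key
  exact ⟨a, b, ha, hb, (hzero 0 (.inl rfl)).1, (hzero M (.inr rfl)).2, h⟩

end IsLaneExchangeFlux

theorem relaxation_step_source_nonincreasing_general
(M : ℕ)
    (R : ℕ → ℝ)
    (𝒮 τ Δt : ℝ) (h𝒮 : 0 < 𝒮) (hτ : 0 < τ) (hΔt : 0 < Δt)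
    (hΔtτ : Δt ≤ τ / (2 * 𝒮))
    (S : ℕ → ℝ → ℝ → ℝ)
    (hS0 : ∀ u w, S 0 u w = 0)
    (hSM : ∀ u w, S M u w = 0)
    (hSC1 : ∀ j, 1 ≤ j → j ≤ M - 1 → ContDiff ℝ 1 (Function.uncurry (S j)))
    (hS1 : ∀ j, 1 ≤ j → j ≤ M - 1 → ∀ u ∈ Icc (0:ℝ) (R j), ∀ w ∈ Icc (0:ℝ) (R (j+1)),
      deriv (fun u' => S j u' w) u ∈ Icc (0:ℝ) 𝒮)
    (hS2 : ∀ j, 1 ≤ j → j ≤ M - 1 → ∀ u ∈ Icc (0:ℝ) (R j), ∀ w ∈ Icc (0:ℝ) (R (j+1)),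
      deriv (fun w' => S j u w') w ∈ Icc (-𝒮) (0:ℝ))
    (hS00 : ∀ j, 1 ≤ j → j ≤ M - 1 → S j 0 0 = 0)
    (hSRR : ∀ j, 1 ≤ j → j ≤ M - 1 → S j (R j) (R (j+1)) = 0)
    (g : (ℕ → ℝ) → ℕ → ℝ)
    (hg : ∀ ρ j, g ρ j = S (j-1) (ρ (j-1)) (ρ j) - S j (ρ j) (ρ (j+1)))
    (T : (ℕ → ℝ) → ℕ → ℝ)
    (hT : ∀ ρ j, T ρ j = ρ j + (Δt / τ) * g ρ j)
    (ρ : ℕ → ℝ) (hρ : ∀ j, 1 ≤ j → j ≤ M → ρ j ∈ Icc (0:ℝ) (R j)) :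
    ∑ j ∈ Finset.Icc 1 M, |g (T ρ) j| ≤ ∑ j ∈ Finset.Icc 1 M, |g ρ j| := by
  obtain rfl : g = laneSource S := funext fun ρ => funext (hg ρ)
  have hS : IsLaneExchangeFlux M R 𝒮 S :=
    ⟨hS0, hSM, fun j h₁ h₂ => ⟨hSC1 j h₁ h₂, hS1 j h₁ h₂, hS2 j h₁ h₂⟩, hS00, hSRR⟩
  set κ := Δt / τ
  have hκ : 0 ≤ κ := div_nonneg hΔt.le hτ.le
  have hκ𝒮 : κ * (2 * 𝒮) ≤ 1 := by
    rw [div_mul_eq_mul_div, div_le_one hτ, ← le_div_iff₀ (by positivity)]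
    exact hΔtτ
  have hTρ : ∀ j, 1 ≤ j → j ≤ M → T ρ j ∈ Icc 0 (R j) := fun j h₁ h₂ => by
    rw [hT]
    exact add_mul_mem_Icc (hρ j h₁ h₂) (hS.laneSource_mem_Icc h𝒮.le hρ h₁ h₂) hκ hκ𝒮
  obtain ⟨a, b, ha, hb, ha0, hbM, hflux⟩ := hS.exists_sub_eq h𝒮.le hρ hTρ
  have hstep : ∀ k, T ρ k - ρ k = κ * laneSource S ρ k := fun k => by rw [hT]; ring
  refine sum_abs_tridiagonal_update_le M (κ * a ·) (κ * b ·) (fun j => mul_nonneg hκ (ha j).1)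
    (fun j => mul_nonneg hκ (hb j).1) (fun j _ => ?_) (by simp [ha0]) (by simp [hbM])
    (fun j hj => ?_)
  · calc κ * b (j - 1) + κ * a j = κ * (b (j - 1) + a j) := by ring
      _ ≤ κ * (2 * 𝒮) := by gcongr; linarith [(hb (j - 1)).2, (ha j).2]
      _ ≤ 1 := hκ𝒮
  · obtain ⟨hj₁, hj₂⟩ := Finset.mem_Icc.1 hj
    obtain ⟨k, rfl⟩ : ∃ k, j = k + 1 := ⟨j - 1, by omega⟩
    have hleft := hflux k (by omega)
    have hright := hflux (k + 1) hj₂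
    rw [hstep, hstep] at hleft hright
    simp only [laneSource, Nat.add_sub_cancel] at hleft hright ⊢
    linear_combination hleft - hright

/-- Key telescoping estimate in the proof of Lemma 2.5: the ℓ¹ norm of the
lane-exchange source vector does not increase under the relaxation step. -/
theorem relaxation_step_source_nonincreasing
(M : ℕ) (hM : 1 ≤ M)
    (R : ℕ → ℝ) (hR : ∀ j, 1 ≤ j → j ≤ M → 0 < R j)
    (𝒮 τ Δt : ℝ) (h𝒮 : 0 < 𝒮) (hτ : 0 < τ) (hΔt : 0 < Δt)
    (hΔtτ : Δt ≤ τ / (2 * 𝒮))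
    (S : ℕ → ℝ → ℝ → ℝ)
    (hS0 : ∀ u w, S 0 u w = 0)
    (hSM : ∀ u w, S M u w = 0)
    (hSC1 : ∀ j, 1 ≤ j → j ≤ M - 1 → ContDiff ℝ 1 (Function.uncurry (S j)))
    (hS1 : ∀ j, 1 ≤ j → j ≤ M - 1 → ∀ u ∈ Icc (0:ℝ) (R j), ∀ w ∈ Icc (0:ℝ) (R (j+1)),
      deriv (fun u' => S j u' w) u ∈ Icc (0:ℝ) 𝒮)
    (hS2 : ∀ j, 1 ≤ j → j ≤ M - 1 → ∀ u ∈ Icc (0:ℝ) (R j), ∀ w ∈ Icc (0:ℝ) (R (j+1)),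
      deriv (fun w' => S j u w') w ∈ Icc (-𝒮) (0:ℝ))
    (hS00 : ∀ j, 1 ≤ j → j ≤ M - 1 → S j 0 0 = 0)
    (hSRR : ∀ j, 1 ≤ j → j ≤ M - 1 → S j (R j) (R (j+1)) = 0)
    (g : (ℕ → ℝ) → ℕ → ℝ)
    (hg : ∀ ρ j, g ρ j = S (j-1) (ρ (j-1)) (ρ j) - S j (ρ j) (ρ (j+1)))
    (T : (ℕ → ℝ) → ℕ → ℝ)
    (hT : ∀ ρ j, T ρ j = ρ j + (Δt / τ) * g ρ j)
    (ρ : ℕ → ℝ) (hρ : ∀ j, 1 ≤ j → j ≤ M → ρ j ∈ Icc (0:ℝ) (R j)) :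
    ∑ j ∈ Finset.Icc 1 M, |g (T ρ) j| ≤ ∑ j ∈ Finset.Icc 1 M, |g ρ j| :=
  relaxation_step_source_nonincreasing_general M R 𝒮 τ Δt h𝒮 hτ hΔt hΔtτ S hS0 hSM hSC1 hS1 hS2 hS00
    hSRR g hg T hT ρ hρ
end

section
/- Under the stated two-lane assumptions and for a time step Δt with 0 < Δt ≤ τ/(2𝒮), define the two-lane relaxation step T₁(ρ₁,ρ₂) = ρ₁ − (Δt/τ)·S(ρ₁,ρ₂) and T₂(ρ₁,ρ₂) = ρ₂ + (Δt/τ)·S(ρ₁,ρ₂). Then for every (ρ₁,ρ₂) ∈ [0,R₁]×[0,R₂] the updated state satisfies |S(T₁(ρ₁,ρ₂), T₂(ρ₁,ρ₂))| ≤ (1 − 2cΔt/τ)·|S(ρ₁,ρ₂)|. (Geometric contraction of the lane-exchange source in one splitting step, which is the key estimate in the proof of Lemma 4.1.) -/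
/-!
Moving along the antidiagonal direction `(-1, 1)` by `h` changes `S` by `-k h` with
`k = ∂₁S - ∂₂S ∈ [2c, 2𝒮]` (two one-variable mean value steps). The relaxation step moves by
`h = (Δt/τ) S`, so the new source is `(1 - k Δt/τ) S` with `0 ≤ 1 - k Δt/τ ≤ 1 - 2c Δt/τ`.
The step stays in the rectangle because `S(0,0) = S(R₁,R₂) = 0` and the derivative bounds give
`-𝒮 ρ₂ ≤ S(ρ₁,ρ₂) ≤ 𝒮 ρ₁` and `-𝒮 (R₁ - ρ₁) ≤ S(ρ₁,ρ₂) ≤ 𝒮 (R₂ - ρ₂)`, and `Δt 𝒮/τ ≤ 1/2`.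
-/

open Set

theorem exists_sub_eq_mul_of_deriv_mem_Icc {f : ℝ → ℝ} {s : Set ℝ} {lo hi : ℝ}
    (hs : s.OrdConnected) (hf : ∀ x ∈ s, DifferentiableAt ℝ f x)
    (hf' : ∀ x ∈ s, deriv f x ∈ Icc lo hi) {x y : ℝ} (hx : x ∈ s) (hy : y ∈ s) :
    ∃ k ∈ Icc lo hi, f y - f x = k * (y - x) := by
  wlog hxy : x ≤ y generalizing x y
  · obtain ⟨k, hk, h⟩ := this hy hx (le_of_not_ge hxy)
    exact ⟨k, hk, by linarith⟩
  rcases hxy.eq_or_lt with rfl | hlt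
  · exact ⟨deriv f x, hf' x hx, by ring⟩
  have hsub : Icc x y ⊆ s := hs.out hx hy
  obtain ⟨ξ, hξ, hslope⟩ := exists_deriv_eq_slope f hlt
    (fun z hz => (hf z (hsub hz)).continuousAt.continuousWithinAt)
    (fun z hz => (hf z (hsub (Ioo_subset_Icc_self hz))).differentiableWithinAt)
  refine ⟨deriv f ξ, hf' ξ (hsub (Ioo_subset_Icc_self hξ)), ?_⟩
  rw [hslope, div_mul_cancel₀ _ (sub_ne_zero.2 hlt.ne')]

structure IsTwoLaneSource (S : ℝ → ℝ → ℝ) (R₁ R₂ c 𝒮 : ℝ) : Prop where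
  deriv_fst_mem : ∀ u ∈ Icc (0:ℝ) R₁, ∀ w ∈ Icc (0:ℝ) R₂,
    deriv (fun u' => S u' w) u ∈ Icc c 𝒮
  deriv_snd_mem : ∀ u ∈ Icc (0:ℝ) R₁, ∀ w ∈ Icc (0:ℝ) R₂,
    deriv (fun w' => S u w') w ∈ Icc (-𝒮) (-c)

namespace IsTwoLaneSource

variable {S : ℝ → ℝ → ℝ} {R₁ R₂ c 𝒮 : ℝ}

/- Differentiability comes for free: a `deriv` bounded away from `0` is not a junk value. -/
theorem exists_sub_fst (hS : IsTwoLaneSource S R₁ R₂ c 𝒮) (hc : 0 < c)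
    {w : ℝ} (hw : w ∈ Icc 0 R₂) {u u' : ℝ} (hu : u ∈ Icc 0 R₁) (hu' : u' ∈ Icc 0 R₁) :
    ∃ k ∈ Icc c 𝒮, S u' w - S u w = k * (u' - u) :=
  exists_sub_eq_mul_of_deriv_mem_Icc ordConnected_Icc
    (fun x hx => differentiableAt_of_deriv_ne_zero
      (hc.trans_le (hS.deriv_fst_mem x hx w hw).1).ne')
    (fun x hx => hS.deriv_fst_mem x hx w hw) hu hu'

theorem exists_sub_snd (hS : IsTwoLaneSource S R₁ R₂ c 𝒮) (hc : 0 < c)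
    {u : ℝ} (hu : u ∈ Icc 0 R₁) {w w' : ℝ} (hw : w ∈ Icc 0 R₂) (hw' : w' ∈ Icc 0 R₂) :
    ∃ k ∈ Icc (-𝒮) (-c), S u w' - S u w = k * (w' - w) :=
  exists_sub_eq_mul_of_deriv_mem_Icc ordConnected_Icc
    (fun x hx => differentiableAt_of_deriv_ne_zero
      ((hS.deriv_snd_mem u hu x hx).2.trans_lt (neg_neg_of_pos hc)).ne)
    (fun x hx => hS.deriv_snd_mem u hu x hx) hw hw'

theorem sub_mem_Icc (hS : IsTwoLaneSource S R₁ R₂ c 𝒮) (hc : 0 < c)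
    {u u' w w' : ℝ} (hu : u ∈ Icc 0 R₁) (hu' : u' ∈ Icc 0 R₁) (hw : w ∈ Icc 0 R₂)
    (hw' : w' ∈ Icc 0 R₂) (huu' : u ≤ u') (hww' : w ≤ w') :
    S u' w' - S u w ∈ Icc (-(𝒮 * (w' - w))) (𝒮 * (u' - u)) := by
  obtain ⟨k₁, hk₁, h₁⟩ := hS.exists_sub_fst hc hw hu hu'
  obtain ⟨k₂, hk₂, h₂⟩ := hS.exists_sub_snd hc hu' hw hw'
  have hu_pos : 0 ≤ u' - u := sub_nonneg.2 huu'
  have hw_pos : 0 ≤ w' - w := sub_nonneg.2 hww'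
  constructor
  · nlinarith [hk₁.1, hk₂.1, mul_le_mul_of_nonneg_right hk₂.1 hw_pos]
  · nlinarith [hk₁.2, hk₂.2, mul_le_mul_of_nonneg_right hk₁.2 hu_pos]

theorem exists_antidiagonal_step (hS : IsTwoLaneSource S R₁ R₂ c 𝒮) (hc : 0 < c)
    {u w h : ℝ} (hu : u ∈ Icc 0 R₁) (hw : w ∈ Icc 0 R₂) (hu' : u - h ∈ Icc 0 R₁)
    (hw' : w + h ∈ Icc 0 R₂) :
    ∃ k ∈ Icc (2 * c) (2 * 𝒮), S (u - h) (w + h) = S u w - k * h := by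
  obtain ⟨k₁, hk₁, h₁⟩ := hS.exists_sub_fst hc hw' hu hu'
  obtain ⟨k₂, hk₂, h₂⟩ := hS.exists_sub_snd hc hu hw hw'
  refine ⟨k₁ - k₂, ⟨by linarith [hk₁.1, hk₂.2], by linarith [hk₁.2, hk₂.1]⟩, ?_⟩
  linear_combination h₁ + h₂

theorem relaxation_step_mem (hS : IsTwoLaneSource S R₁ R₂ c 𝒮) (hc : 0 < c)
    (h₀ : S 0 0 = 0) (hR : S R₁ R₂ = 0) {ε : ℝ} (hε : 0 ≤ ε) (hε𝒮 : 2 * 𝒮 * ε ≤ 1)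
    {ρ₁ ρ₂ : ℝ} (hρ₁ : ρ₁ ∈ Icc 0 R₁) (hρ₂ : ρ₂ ∈ Icc 0 R₂) :
    ρ₁ - ε * S ρ₁ ρ₂ ∈ Icc 0 R₁ ∧ ρ₂ + ε * S ρ₁ ρ₂ ∈ Icc 0 R₂ := by
  have h0R₁ : (0:ℝ) ∈ Icc 0 R₁ := ⟨le_rfl, hρ₁.1.trans hρ₁.2⟩
  have h0R₂ : (0:ℝ) ∈ Icc 0 R₂ := ⟨le_rfl, hρ₂.1.trans hρ₂.2⟩
  have hR₁ : R₁ ∈ Icc 0 R₁ := ⟨h0R₁.2, le_rfl⟩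
  have hR₂ : R₂ ∈ Icc 0 R₂ := ⟨h0R₂.2, le_rfl⟩
  have hlow := hS.sub_mem_Icc hc h0R₁ hρ₁ h0R₂ hρ₂ hρ₁.1 hρ₂.1
  have hupp := hS.sub_mem_Icc hc hρ₁ hR₁ hρ₂ hR₂ hρ₁.2 hρ₂.2
  rw [h₀, sub_zero] at hlow
  rw [hR, zero_sub] at hupp
  have hε₁ := mul_le_mul_of_nonneg_left hlow.1 hε
  have hε₂ := mul_le_mul_of_nonneg_left hlow.2 hε
  have hε₃ := mul_le_mul_of_nonneg_left hupp.1 hε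
  have hε₄ := mul_le_mul_of_nonneg_left hupp.2 hε
  refine ⟨⟨?_, ?_⟩, ⟨?_, ?_⟩⟩ <;>
    nlinarith [hρ₁.1, hρ₁.2, hρ₂.1, hρ₂.2, mul_nonneg hε hρ₁.1, mul_nonneg hε hρ₂.1,
      mul_nonneg hε (sub_nonneg.2 hρ₁.2), mul_nonneg hε (sub_nonneg.2 hρ₂.2)]

theorem abs_relaxation_step_le (hS : IsTwoLaneSource S R₁ R₂ c 𝒮) (hc : 0 < c)
    (h₀ : S 0 0 = 0) (hR : S R₁ R₂ = 0) {ε : ℝ} (hε : 0 ≤ ε) (hε𝒮 : 2 * 𝒮 * ε ≤ 1)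
    {ρ₁ ρ₂ : ℝ} (hρ₁ : ρ₁ ∈ Icc 0 R₁) (hρ₂ : ρ₂ ∈ Icc 0 R₂) :
    |S (ρ₁ - ε * S ρ₁ ρ₂) (ρ₂ + ε * S ρ₁ ρ₂)| ≤ (1 - 2 * c * ε) * |S ρ₁ ρ₂| := by
  obtain ⟨hρ₁', hρ₂'⟩ := hS.relaxation_step_mem hc h₀ hR hε hε𝒮 hρ₁ hρ₂
  obtain ⟨k, hk, hstep⟩ := hS.exists_antidiagonal_step hc hρ₁ hρ₂ hρ₁' hρ₂'
  have hfactor : 0 ≤ 1 - k * ε := by nlinarith [mul_le_mul_of_nonneg_right hk.2 hε]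
  rw [hstep, show S ρ₁ ρ₂ - k * (ε * S ρ₁ ρ₂) = (1 - k * ε) * S ρ₁ ρ₂ by ring, abs_mul,
    abs_of_nonneg hfactor]
  exact mul_le_mul_of_nonneg_right (by nlinarith [mul_le_mul_of_nonneg_right hk.1 hε])
    (abs_nonneg _)

end IsTwoLaneSource

theorem two_lane_source_contraction_step_general
    (R₁ R₂ c 𝒮 τ Δt : ℝ)
    (hc : 0 < c) (hc𝒮 : c ≤ 𝒮) (hτ : 0 < τ)
    (hΔt : 0 < Δt) (hΔtτ : Δt ≤ τ / (2 * 𝒮))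
    (S : ℝ → ℝ → ℝ)
    (hS1 : ∀ u ∈ Icc (0:ℝ) R₁, ∀ w ∈ Icc (0:ℝ) R₂,
      deriv (fun u' => S u' w) u ∈ Icc c 𝒮)
    (hS2 : ∀ u ∈ Icc (0:ℝ) R₁, ∀ w ∈ Icc (0:ℝ) R₂,
      deriv (fun w' => S u w') w ∈ Icc (-𝒮) (-c))
    (hS00 : S 0 0 = 0) (hSRR : S R₁ R₂ = 0)
    (T₁ T₂ : ℝ → ℝ → ℝ)
    (hT₁ : ∀ ρ₁ ρ₂, T₁ ρ₁ ρ₂ = ρ₁ - (Δt / τ) * S ρ₁ ρ₂)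
    (hT₂ : ∀ ρ₁ ρ₂, T₂ ρ₁ ρ₂ = ρ₂ + (Δt / τ) * S ρ₁ ρ₂)
    (ρ₁ ρ₂ : ℝ) (h₁ : ρ₁ ∈ Icc (0:ℝ) R₁) (h₂ : ρ₂ ∈ Icc (0:ℝ) R₂) :
    |S (T₁ ρ₁ ρ₂) (T₂ ρ₁ ρ₂)| ≤ (1 - 2 * c * Δt / τ) * |S ρ₁ ρ₂| := by
  have h𝒮 : 0 < 2 * 𝒮 := by linarith
  have hstep : 2 * 𝒮 * (Δt / τ) ≤ 1 := by
    rw [le_div_iff₀ h𝒮] at hΔtτ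
    rw [mul_div_assoc', div_le_one hτ]
    linarith
  rw [hT₁, hT₂, mul_div_assoc]
  exact IsTwoLaneSource.abs_relaxation_step_le ⟨hS1, hS2⟩ hc hS00 hSRR
    (div_nonneg hΔt.le hτ.le) hstep h₁ h₂

/-- Geometric contraction of the lane-exchange source in one splitting step
(key estimate in the proof of Lemma 4.1). -/
theorem two_lane_source_contraction_step
    (R₁ R₂ c 𝒮 τ Δt : ℝ)
    (hR₁ : 0 < R₁) (hR₂ : 0 < R₂) (hc : 0 < c) (hc𝒮 : c ≤ 𝒮) (hτ : 0 < τ)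
    (hΔt : 0 < Δt) (hΔtτ : Δt ≤ τ / (2 * 𝒮))
    (S : ℝ → ℝ → ℝ)
    (hSC1 : ContDiff ℝ 1 (Function.uncurry S))
    (hS1 : ∀ u ∈ Icc (0:ℝ) R₁, ∀ w ∈ Icc (0:ℝ) R₂,
      deriv (fun u' => S u' w) u ∈ Icc c 𝒮)
    (hS2 : ∀ u ∈ Icc (0:ℝ) R₁, ∀ w ∈ Icc (0:ℝ) R₂,
      deriv (fun w' => S u w') w ∈ Icc (-𝒮) (-c))
    (hS00 : S 0 0 = 0) (hSRR : S R₁ R₂ = 0)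
    (T₁ T₂ : ℝ → ℝ → ℝ)
    (hT₁ : ∀ ρ₁ ρ₂, T₁ ρ₁ ρ₂ = ρ₁ - (Δt / τ) * S ρ₁ ρ₂)
    (hT₂ : ∀ ρ₁ ρ₂, T₂ ρ₁ ρ₂ = ρ₂ + (Δt / τ) * S ρ₁ ρ₂)
    (ρ₁ ρ₂ : ℝ) (h₁ : ρ₁ ∈ Icc (0:ℝ) R₁) (h₂ : ρ₂ ∈ Icc (0:ℝ) R₂) :
    |S (T₁ ρ₁ ρ₂) (T₂ ρ₁ ρ₂)| ≤ (1 - 2 * c * Δt / τ) * |S ρ₁ ρ₂| :=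
  two_lane_source_contraction_step_general R₁ R₂ c 𝒮 τ Δt hc hc𝒮 hτ hΔt hΔtτ S hS1 hS2 hS00 hSRR T₁
    T₂ hT₁ hT₂ ρ₁ ρ₂ h₁ h₂
end

section
/- Let R > 0 and let S : ℝ² → ℝ be a function that is nondecreasing in its first argument and nonincreasing in its second argument on [0,R]×[0,R], and satisfies S(κ,κ) = 0 for every κ ∈ [0,R]. Then for all ρ₁, ρ₂, κ ∈ [0,R] one has (sgn(ρ₂ − κ) − sgn(ρ₁ − κ))·S(ρ₁,ρ₂) ≤ 0, where sgn denotes the sign function with sgn(0) = 0. (Sign estimate for the entropy dissipation of the coupling source, established in the proof of Theorem 4.2.) -/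
open Set

lemma sign_lt_aux (x y : ℝ) (h : Real.sign x < Real.sign y) : x ≤ 0 ∧ 0 ≤ y := by
  rcases lt_trichotomy x 0 with hx | hx | hx <;>
  rcases lt_trichotomy y 0 with hy | hy | hy <;>
  simp_all [Real.sign_of_neg, Real.sign_of_pos, Real.sign_zero] <;> first | exact ⟨by linarith, by linarith⟩ | linarith

/-- Sign estimate for the entropy dissipation of the coupling source,
established in the proof of Theorem 4.2. -/
theorem coupling_source_sign_estimate
    (R : ℝ) (hR : 0 < R) (S : ℝ → ℝ → ℝ)
    (hmono1 : ∀ w ∈ Icc (0:ℝ) R, ∀ u ∈ Icc (0:ℝ) R, ∀ u' ∈ Icc (0:ℝ) R,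
      u ≤ u' → S u w ≤ S u' w)
    (hmono2 : ∀ u ∈ Icc (0:ℝ) R, ∀ w ∈ Icc (0:ℝ) R, ∀ w' ∈ Icc (0:ℝ) R,
      w ≤ w' → S u w' ≤ S u w)
    (hdiag : ∀ κ ∈ Icc (0:ℝ) R, S κ κ = 0)
    (ρ₁ : ℝ) (hρ₁ : ρ₁ ∈ Icc (0:ℝ) R)
    (ρ₂ : ℝ) (hρ₂ : ρ₂ ∈ Icc (0:ℝ) R)
    (κ : ℝ) (hκ : κ ∈ Icc (0:ℝ) R) :
    (Real.sign (ρ₂ - κ) - Real.sign (ρ₁ - κ)) * S ρ₁ ρ₂ ≤ 0 := by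
  rcases lt_trichotomy (Real.sign (ρ₁ - κ)) (Real.sign (ρ₂ - κ)) with h | h | h
  · obtain ⟨h1, h2⟩ := sign_lt_aux _ _ h
    have hρ₁κ : ρ₁ ≤ κ := by linarith
    have hκρ₂ : κ ≤ ρ₂ := by linarith
    have hS : S ρ₁ ρ₂ ≤ 0 := by
      calc S ρ₁ ρ₂ ≤ S κ ρ₂ := hmono1 ρ₂ hρ₂ ρ₁ hρ₁ κ hκ hρ₁κ
        _ ≤ S κ κ := hmono2 κ hκ κ hκ ρ₂ hρ₂ hκρ₂
        _ = 0 := hdiag κ hκ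
    have hpos : 0 ≤ Real.sign (ρ₂ - κ) - Real.sign (ρ₁ - κ) := by linarith
    exact mul_nonpos_of_nonneg_of_nonpos hpos hS
  · rw [h]; simp
  · obtain ⟨h1, h2⟩ := sign_lt_aux _ _ h
    have hρ₂κ : ρ₂ ≤ κ := by linarith
    have hκρ₁ : κ ≤ ρ₁ := by linarith
    have hS : 0 ≤ S ρ₁ ρ₂ := by
      calc (0:ℝ) = S κ κ := (hdiag κ hκ).symm
        _ ≤ S κ ρ₂ := hmono2 κ hκ ρ₂ hρ₂ κ hκ hρ₂κ
        _ ≤ S ρ₁ ρ₂ := hmono1 ρ₂ hρ₂ κ hκ ρ₁ hρ₁ hκρ₁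
    have hneg : Real.sign (ρ₂ - κ) - Real.sign (ρ₁ - κ) ≤ 0 := by linarith
    exact mul_nonpos_of_nonpos_of_nonneg hneg hS
end

section
/- Let R > 0, let f : [0,R] → ℝ be continuous, and for ξ ∈ ℝ define the reduced flux capacity 𝓕_{1/2}(ξ) = max over r ∈ [0,R/2] of ( (1/2)·f(2r) − r·ξ ). Then for every k ∈ [0,R] and every ξ ∈ ℝ one has 2·( f(k) − k·ξ − 𝓕_{1/2}(ξ) )⁺ ≤ ( f(k) − k·ξ )⁺, where x⁺ = max(x,0). (Comparison between the non-classical entropy terms of the moving-bottleneck model with flux limiter 𝓕_{1/2} and of the limit obtained from the two-lane model, established in the Remark following Theorem 4.2.) -/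
open Set

/-- Comparison between the non-classical entropy terms of the moving-bottleneck
model with flux limiter 𝓕_{1/2} and of the limit obtained from the two-lane
model (Remark following Theorem 4.2). -/
theorem nonclassical_entropy_term_comparison
    (R : ℝ) (hR : 0 < R) (f : ℝ → ℝ) (hf : ContinuousOn f (Icc 0 R))
    (F : ℝ → ℝ)
    (hF : ∀ ξ : ℝ, IsGreatest
      ((fun r => (1 / 2) * f (2 * r) - r * ξ) '' Icc (0:ℝ) (R / 2)) (F ξ))
    (k : ℝ) (hk : k ∈ Icc (0:ℝ) R) (ξ : ℝ) :
    2 * max (f k - k * ξ - F ξ) 0 ≤ max (f k - k * ξ) 0 := by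
  have hmem : (1 / 2) * f (2 * (k / 2)) - (k / 2) * ξ ∈
      ((fun r => (1 / 2) * f (2 * r) - r * ξ) '' Icc (0:ℝ) (R / 2)) := by
    exact ⟨k / 2, ⟨by linarith [hk.1], by linarith [hk.2]⟩, rfl⟩
  have hle := (hF ξ).2 hmem
  have hk2 : 2 * (k / 2) = k := by ring
  rw [hk2] at hle
  have h2 : 2 * (f k - k * ξ - F ξ) ≤ f k - k * ξ := by linarith
  have : 2 * max (f k - k * ξ - F ξ) 0 = max (2 * (f k - k * ξ - F ξ)) 0 := by
    rw [mul_max_of_nonneg _ _ (by norm_num : (0:ℝ) ≤ 2), mul_zero]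
  rw [this]
  exact max_le_max h2 le_rfl
end

section
/- Under the stated two-lane assumptions, let T > 0 and let (ρ₁,ρ₂) : [0,T] → [0,R₁]×[0,R₂] be differentiable functions solving the lane-exchange ODE system ρ₁′(t) = −(1/τ)·S(ρ₁(t),ρ₂(t)) and ρ₂′(t) = (1/τ)·S(ρ₁(t),ρ₂(t)) for all t ∈ [0,T]. Then for every t ∈ [0,T] one has |S(ρ₁(t),ρ₂(t))| ≤ e^{−2ct/τ}·|S(ρ₁(0),ρ₂(0))|. (Exponential decay of the coupling source along the relaxation ODE, which is the two-lane instance of the linearized decay estimate (3.14) used in the proof of Theorem 3.4.) -/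
/-! Along the flow, `g = S(ρ₁, ρ₂)` satisfies `g' = -((∂₁S - ∂₂S) / τ) g` with
`∂₁S - ∂₂S ≥ 2c` on the box, so `exp (4ct/τ) g²` is nonincreasing. -/

open Set Real

theorem DifferentiableAt.hasDerivAt_uncurry_comp {S : ℝ → ℝ → ℝ} {f₁ f₂ : ℝ → ℝ}
    {f₁' f₂' t : ℝ} (hS : DifferentiableAt ℝ (Function.uncurry S) (f₁ t, f₂ t))
    (h₁ : HasDerivAt f₁ f₁' t) (h₂ : HasDerivAt f₂ f₂' t) :
    HasDerivAt (fun s => S (f₁ s) (f₂ s))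
      (deriv (fun u => S u (f₂ t)) (f₁ t) * f₁' + deriv (fun w => S (f₁ t) w) (f₂ t) * f₂') t := by
  have hL := hS.hasFDerivAt
  set L := fderiv ℝ (Function.uncurry S) (f₁ t, f₂ t)
  have hpartial₁ : HasDerivAt (fun u => S u (f₂ t)) (L (1, 0)) (f₁ t) :=
    hL.comp_hasDerivAt (f := fun u => (u, f₂ t)) _
      ((hasDerivAt_id _).prodMk (hasDerivAt_const _ _))
  have hpartial₂ : HasDerivAt (fun w => S (f₁ t) w) (L (0, 1)) (f₂ t) :=
    hL.comp_hasDerivAt (f := fun w => (f₁ t, w)) _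
      ((hasDerivAt_const _ _).prodMk (hasDerivAt_id _))
  rw [hpartial₁.deriv, hpartial₂.deriv]
  have hsplit : ((f₁', f₂') : ℝ × ℝ) = f₁' • ((1 : ℝ), (0 : ℝ)) + f₂' • ((0 : ℝ), (1 : ℝ)) := by
    simp
  refine (hL.comp_hasDerivAt t (h₁.prodMk h₂)).congr_deriv ?_
  rw [hsplit, map_add, map_smul, map_smul, smul_eq_mul, smul_eq_mul, mul_comm, mul_comm f₂']

theorem abs_le_exp_mul_abs_of_mul_deriv_le {g g' : ℝ → ℝ} {k a b : ℝ}
    (hg : ∀ t ∈ Icc a b, HasDerivAt g (g' t) t)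
    (hdecay : ∀ t ∈ Icc a b, g t * g' t ≤ -k * g t ^ 2) :
    ∀ t ∈ Icc a b, |g t| ≤ exp (-k * (t - a)) * |g a| := by
  set ψ : ℝ → ℝ := fun t => exp (2 * k * (t - a)) * g t ^ 2
  have hψ : ∀ t ∈ Icc a b,
      HasDerivAt ψ (2 * exp (2 * k * (t - a)) * (k * g t ^ 2 + g t * g' t)) t := by
    intro t ht
    have hexp : HasDerivAt (fun s => exp (2 * k * (s - a))) (exp (2 * k * (t - a)) * (2 * k)) t :=
      (((hasDerivAt_id t).sub_const a).const_mul (2 * k)).exp.congr_deriv (by simp)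
    refine (hexp.mul ((hg t ht).pow 2)).congr_deriv ?_
    simp only [Pi.pow_apply, Nat.cast_ofNat]
    ring
  have hanti : AntitoneOn ψ (Icc a b) := by
    refine antitoneOn_of_hasDerivWithinAt_nonpos (convex_Icc a b)
      (fun t ht => (hψ t ht).continuousAt.continuousWithinAt)
      (fun t ht => (hψ t (interior_subset ht)).hasDerivWithinAt) fun t ht => ?_
    have ht' := interior_subset ht
    have hk : k * g t ^ 2 + g t * g' t ≤ 0 := by linarith [hdecay t ht']
    exact mul_nonpos_of_nonneg_of_nonpos (by positivity) hk
  intro t ht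
  have hψt : ψ t ≤ g a ^ 2 := by
    simpa [ψ] using hanti ⟨le_rfl, ht.1.trans ht.2⟩ ht ht.1
  have hscaled : exp (k * (t - a)) * |g t| ≤ |g a| := by
    have hsq : (exp (k * (t - a)) * g t) ^ 2 = ψ t := by
      rw [mul_pow, ← exp_nat_mul]
      simp only [ψ]
      ring_nf
    rw [← abs_of_pos (exp_pos (k * (t - a))), ← abs_mul]
    exact sq_le_sq.mp (hsq ▸ hψt)
  calc |g t| = exp (-k * (t - a)) * (exp (k * (t - a)) * |g t|) := by
        rw [← mul_assoc, ← exp_add, neg_mul, neg_add_cancel, exp_zero, one_mul]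
    _ ≤ exp (-k * (t - a)) * |g a| := by gcongr

theorem two_lane_ode_source_exponential_decay_general
    (R₁ R₂ c 𝒮 τ : ℝ)
    (hτ : 0 < τ)
    (S : ℝ → ℝ → ℝ)
    (hSC1 : ContDiff ℝ 1 (Function.uncurry S))
    (hS1 : ∀ u ∈ Icc (0:ℝ) R₁, ∀ w ∈ Icc (0:ℝ) R₂,
      deriv (fun u' => S u' w) u ∈ Icc c 𝒮)
    (hS2 : ∀ u ∈ Icc (0:ℝ) R₁, ∀ w ∈ Icc (0:ℝ) R₂,
      deriv (fun w' => S u w') w ∈ Icc (-𝒮) (-c))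
    (Tmax : ℝ)
    (ρ₁ ρ₂ : ℝ → ℝ)
    (hbox : ∀ t ∈ Icc (0:ℝ) Tmax, ρ₁ t ∈ Icc (0:ℝ) R₁ ∧ ρ₂ t ∈ Icc (0:ℝ) R₂)
    (hode₁ : ∀ t ∈ Icc (0:ℝ) Tmax,
      HasDerivAt ρ₁ (-(1 / τ) * S (ρ₁ t) (ρ₂ t)) t)
    (hode₂ : ∀ t ∈ Icc (0:ℝ) Tmax,
      HasDerivAt ρ₂ ((1 / τ) * S (ρ₁ t) (ρ₂ t)) t) :
    ∀ t ∈ Icc (0:ℝ) Tmax,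
      |S (ρ₁ t) (ρ₂ t)| ≤ Real.exp (-2 * c * t / τ) * |S (ρ₁ 0) (ρ₂ 0)| := by
  set g : ℝ → ℝ := fun t => S (ρ₁ t) (ρ₂ t)
  set K : ℝ → ℝ := fun t =>
    deriv (fun u => S u (ρ₂ t)) (ρ₁ t) - deriv (fun w => S (ρ₁ t) w) (ρ₂ t)
  have hg : ∀ t ∈ Icc 0 Tmax, HasDerivAt g (-(K t / τ) * g t) t := fun t ht =>
    ((hSC1.differentiable one_ne_zero _).hasDerivAt_uncurry_comp
      (hode₁ t ht) (hode₂ t ht)).congr_deriv (by simp only [g, K]; ring)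
  have hdecay : ∀ t ∈ Icc 0 Tmax, g t * (-(K t / τ) * g t) ≤ -(2 * c / τ) * g t ^ 2 := by
    intro t ht
    obtain ⟨hρ₁, hρ₂⟩ := hbox t ht
    have hK : 2 * c / τ ≤ K t / τ := by
      gcongr
      linarith [(hS1 _ hρ₁ _ hρ₂).1, (hS2 _ hρ₁ _ hρ₂).2]
    calc g t * (-(K t / τ) * g t) = -(K t / τ * g t ^ 2) := by ring
      _ ≤ -(2 * c / τ * g t ^ 2) := by gcongr
      _ = -(2 * c / τ) * g t ^ 2 := by ring
  intro t ht
  convert abs_le_exp_mul_abs_of_mul_deriv_le hg hdecay t ht using 3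
  ring

/-- Exponential decay of the coupling source along the two-lane relaxation ODE
(two-lane instance of the linearized decay estimate (3.14) used in the proof of
Theorem 3.4). -/
theorem two_lane_ode_source_exponential_decay
    (R₁ R₂ c 𝒮 τ : ℝ)
    (hR₁ : 0 < R₁) (hR₂ : 0 < R₂) (hc : 0 < c) (hc𝒮 : c ≤ 𝒮) (hτ : 0 < τ)
    (S : ℝ → ℝ → ℝ)
    (hSC1 : ContDiff ℝ 1 (Function.uncurry S))
    (hS1 : ∀ u ∈ Icc (0:ℝ) R₁, ∀ w ∈ Icc (0:ℝ) R₂,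
      deriv (fun u' => S u' w) u ∈ Icc c 𝒮)
    (hS2 : ∀ u ∈ Icc (0:ℝ) R₁, ∀ w ∈ Icc (0:ℝ) R₂,
      deriv (fun w' => S u w') w ∈ Icc (-𝒮) (-c))
    (hS00 : S 0 0 = 0) (hSRR : S R₁ R₂ = 0)
    (Tmax : ℝ) (hT : 0 < Tmax)
    (ρ₁ ρ₂ : ℝ → ℝ)
    (hbox : ∀ t ∈ Icc (0:ℝ) Tmax, ρ₁ t ∈ Icc (0:ℝ) R₁ ∧ ρ₂ t ∈ Icc (0:ℝ) R₂)
    (hode₁ : ∀ t ∈ Icc (0:ℝ) Tmax,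
      HasDerivAt ρ₁ (-(1 / τ) * S (ρ₁ t) (ρ₂ t)) t)
    (hode₂ : ∀ t ∈ Icc (0:ℝ) Tmax,
      HasDerivAt ρ₂ ((1 / τ) * S (ρ₁ t) (ρ₂ t)) t) :
    ∀ t ∈ Icc (0:ℝ) Tmax,
      |S (ρ₁ t) (ρ₂ t)| ≤ Real.exp (-2 * c * t / τ) * |S (ρ₁ 0) (ρ₂ 0)| :=
  two_lane_ode_source_exponential_decay_general R₁ R₂ c 𝒮 τ hτ S hSC1 hS1 hS2 Tmax ρ₁ ρ₂ hbox hode₁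
    hode₂
end

section
/- Under the stated two-lane assumptions with R₁ = R₂ = R, assume in addition S(κ,κ) = 0 for every κ ∈ [0,R]. Let T > 0 and let (ρ₁,ρ₂) : [0,T] → [0,R]×[0,R] be differentiable functions solving ρ₁′(t) = −(1/τ)·S(ρ₁(t),ρ₂(t)) and ρ₂′(t) = (1/τ)·S(ρ₁(t),ρ₂(t)) for all t ∈ [0,T]. Then the total density is conserved, ρ₁(t) + ρ₂(t) = ρ₁(0) + ρ₂(0) for all t ∈ [0,T], the lane difference decays exponentially, |ρ₁(t) − ρ₂(t)| ≤ e^{−2ct/τ}·|ρ₁(0) − ρ₂(0)|, and consequently |ρ_j(t) − (ρ₁(0)+ρ₂(0))/2| ≤ (1/2)·e^{−2ct/τ}·|ρ₁(0) − ρ₂(0)| for j = 1,2 and all t ∈ [0,T]. (Exponential equilibration of the lane densities toward their common mean, the two-lane instance of estimate (3.14) in the proof of Theorem 3.4.) -/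
/-!
The right-hand sides cancel in `ρ₁ + ρ₂`, so the total density is conserved. For the difference
`δ = ρ₁ - ρ₂` we have `δ' = -(2/τ) S(ρ₁, ρ₂)`, and since `S` vanishes on the diagonal and
`∂₁S ≥ c`, `δ · S(ρ₁, ρ₂) ≥ c δ²`. Hence `(δ²)' ≤ -(4c/τ) δ²`, and Grönwall's inequality gives
`|δ(t)| ≤ e^{-2ct/τ} |δ(0)|`. Each density deviates from the conserved mean by `δ/2`.
-/

open Set

theorem add_eq_add_of_hasDerivAt_neg {f h g : ℝ → ℝ} {a b : ℝ}
    (hf : ∀ t ∈ Icc a b, HasDerivAt f (-g t) t) (hh : ∀ t ∈ Icc a b, HasDerivAt h (g t) t) :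
    ∀ t ∈ Icc a b, f t + h t = f a + h a := by
  have hsum : ∀ t ∈ Icc a b, HasDerivAt (fun t => f t + h t) 0 t := fun t ht =>
    ((hf t ht).add (hh t ht)).congr_deriv (neg_add_cancel _)
  exact constant_of_has_deriv_right_zero (fun t ht => (hsum t ht).continuousAt.continuousWithinAt)
    (fun t ht => (hsum t (Ico_subset_Icc_self ht)).hasDerivWithinAt)

open Real in
theorem abs_le_exp_mul_abs_of_mul_deriv_le_s12 {δ δ' : ℝ → ℝ} {k T : ℝ}
    (hδ : ∀ t ∈ Icc 0 T, HasDerivAt δ (δ' t) t)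
    (hdiss : ∀ t ∈ Icc 0 T, δ t * δ' t ≤ -k * δ t ^ 2) :
    ∀ t ∈ Icc 0 T, |δ t| ≤ exp (-k * t) * |δ 0| := by
  have hsq : ∀ t ∈ Icc 0 T, HasDerivAt (fun s => δ s ^ 2) (2 * (δ t * δ' t)) t := fun t ht =>
    ((hδ t ht).fun_pow 2).congr_deriv (by ring)
  have henergy : ∀ t ∈ Icc 0 T, δ t ^ 2 ≤ gronwallBound (δ 0 ^ 2) (-2 * k) 0 (t - 0) :=
    le_gronwallBound_of_liminf_deriv_right_le (fun t ht => (hsq t ht).continuousAt.continuousWithinAt)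
      (fun t ht _ hr => (hsq t (Ico_subset_Icc_self ht)).hasDerivWithinAt.liminf_right_slope_le hr)
      le_rfl (fun t ht => by linarith [hdiss t (Ico_subset_Icc_self ht)])
  intro t ht
  have hbound : δ t ^ 2 ≤ (exp (-k * t) * |δ 0|) ^ 2 := by
    calc δ t ^ 2 ≤ δ 0 ^ 2 * exp (-2 * k * t) := by
          simpa only [sub_zero, gronwallBound_ε0] using henergy t ht
      _ = (exp (-k * t) * |δ 0|) ^ 2 := by
          rw [mul_pow, sq_abs, ← exp_nat_mul]; push_cast; ring_nf
  simpa only [abs_of_nonneg (by positivity : 0 ≤ exp (-k * t) * |δ 0|)] using sq_le_sq.1 hbound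

theorem monotoneOn_sub_mul_of_le_deriv {f : ℝ → ℝ} {c a b : ℝ} (hc : 0 < c)
    (hf : ∀ x ∈ Icc a b, c ≤ deriv f x) : MonotoneOn (fun x => f x - c * x) (Icc a b) := by
  -- `deriv` is junk `0` where `f` is not differentiable, so `0 < c ≤ deriv f x` forces differentiability.
  have hdiff : ∀ x ∈ Icc a b, DifferentiableAt ℝ f x := fun x hx =>
    differentiableAt_of_deriv_ne_zero (hc.trans_le (hf x hx)).ne'
  refine monotoneOn_of_hasDerivWithinAt_nonneg (f' := fun x => deriv f x - c) (convex_Icc a b)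
    (fun x hx => ((hdiff x hx).continuousAt.sub (continuousAt_const.mul continuousAt_id)).continuousWithinAt)
    (fun x hx => ?_) (fun x hx => sub_nonneg.2 (hf x (interior_subset hx)))
  exact (((hdiff x (interior_subset hx)).hasDerivAt.sub ((hasDerivAt_id x).const_mul c)).congr_deriv
    (by ring)).hasDerivWithinAt

theorem mul_sq_le_mul_sub_of_le_deriv {f : ℝ → ℝ} {c a b u w : ℝ} (hc : 0 < c)
    (hf : ∀ x ∈ Icc a b, c ≤ deriv f x) (hu : u ∈ Icc a b) (hw : w ∈ Icc a b) :
    c * (u - w) ^ 2 ≤ (u - w) * (f u - f w) := by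
  have hmono := monotoneOn_sub_mul_of_le_deriv hc hf
  rcases le_total w u with hwu | huw
  · nlinarith [hmono hw hu hwu]
  · nlinarith [hmono hu hw huw]

theorem two_lane_ode_exponential_equilibration_general
    (R c 𝒮 τ : ℝ)
    (hc : 0 < c) (hτ : 0 < τ)
    (S : ℝ → ℝ → ℝ)
    (hS1 : ∀ u ∈ Icc (0:ℝ) R, ∀ w ∈ Icc (0:ℝ) R,
      deriv (fun u' => S u' w) u ∈ Icc c 𝒮)
    (hdiag : ∀ κ ∈ Icc (0:ℝ) R, S κ κ = 0)
    (Tmax : ℝ)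
    (ρ₁ ρ₂ : ℝ → ℝ)
    (hbox : ∀ t ∈ Icc (0:ℝ) Tmax, ρ₁ t ∈ Icc (0:ℝ) R ∧ ρ₂ t ∈ Icc (0:ℝ) R)
    (hode₁ : ∀ t ∈ Icc (0:ℝ) Tmax,
      HasDerivAt ρ₁ (-(1 / τ) * S (ρ₁ t) (ρ₂ t)) t)
    (hode₂ : ∀ t ∈ Icc (0:ℝ) Tmax,
      HasDerivAt ρ₂ ((1 / τ) * S (ρ₁ t) (ρ₂ t)) t) :
    (∀ t ∈ Icc (0:ℝ) Tmax, ρ₁ t + ρ₂ t = ρ₁ 0 + ρ₂ 0) ∧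
    (∀ t ∈ Icc (0:ℝ) Tmax,
      |ρ₁ t - ρ₂ t| ≤ Real.exp (-2 * c * t / τ) * |ρ₁ 0 - ρ₂ 0|) ∧
    (∀ t ∈ Icc (0:ℝ) Tmax,
      |ρ₁ t - (ρ₁ 0 + ρ₂ 0) / 2| ≤ (1 / 2) * Real.exp (-2 * c * t / τ) * |ρ₁ 0 - ρ₂ 0| ∧
      |ρ₂ t - (ρ₁ 0 + ρ₂ 0) / 2| ≤ (1 / 2) * Real.exp (-2 * c * t / τ) * |ρ₁ 0 - ρ₂ 0|) := by
  have hconserved : ∀ t ∈ Icc (0:ℝ) Tmax, ρ₁ t + ρ₂ t = ρ₁ 0 + ρ₂ 0 :=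
    add_eq_add_of_hasDerivAt_neg (fun t ht => (hode₁ t ht).congr_deriv (neg_mul _ _)) hode₂
  have hdecay : ∀ t ∈ Icc (0:ℝ) Tmax,
      |ρ₁ t - ρ₂ t| ≤ Real.exp (-2 * c * t / τ) * |ρ₁ 0 - ρ₂ 0| := by
    have hdiss : ∀ t ∈ Icc (0:ℝ) Tmax, (ρ₁ t - ρ₂ t) *
        (-(1 / τ) * S (ρ₁ t) (ρ₂ t) - (1 / τ) * S (ρ₁ t) (ρ₂ t)) ≤ -(2 * c / τ) * (ρ₁ t - ρ₂ t) ^ 2 := by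
      intro t ht
      obtain ⟨h₁, h₂⟩ := hbox t ht
      have hsign := mul_sq_le_mul_sub_of_le_deriv hc (fun x hx => (hS1 x hx _ h₂).1) h₁ h₂
      rw [hdiag _ h₂, sub_zero] at hsign
      calc _ = -(2 / τ) * ((ρ₁ t - ρ₂ t) * S (ρ₁ t) (ρ₂ t)) := by ring
        _ ≤ -(2 / τ) * (c * (ρ₁ t - ρ₂ t) ^ 2) :=
          mul_le_mul_of_nonpos_left hsign (neg_nonpos.2 (by positivity))
        _ = _ := by ring
    intro t ht
    convert abs_le_exp_mul_abs_of_mul_deriv_le_s12 (δ := fun t => ρ₁ t - ρ₂ t)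
      (fun t ht => (hode₁ t ht).sub (hode₂ t ht)) hdiss t ht using 3
    ring
  refine ⟨hconserved, hdecay, fun t ht => ?_⟩
  have hmean₁ : ρ₁ t - (ρ₁ 0 + ρ₂ 0) / 2 = (ρ₁ t - ρ₂ t) / 2 := by linarith [hconserved t ht]
  have hmean₂ : ρ₂ t - (ρ₁ 0 + ρ₂ 0) / 2 = -((ρ₁ t - ρ₂ t) / 2) := by linarith [hconserved t ht]
  rw [hmean₁, hmean₂, abs_neg, abs_div, abs_two]
  constructor <;> linarith [hdecay t ht]

/-- Exponential equilibration of the lane densities toward their common mean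
(two-lane instance of estimate (3.14) in the proof of Theorem 3.4). -/
theorem two_lane_ode_exponential_equilibration
    (R c 𝒮 τ : ℝ)
    (hR : 0 < R) (hc : 0 < c) (hc𝒮 : c ≤ 𝒮) (hτ : 0 < τ)
    (S : ℝ → ℝ → ℝ)
    (hSC1 : ContDiff ℝ 1 (Function.uncurry S))
    (hS1 : ∀ u ∈ Icc (0:ℝ) R, ∀ w ∈ Icc (0:ℝ) R,
      deriv (fun u' => S u' w) u ∈ Icc c 𝒮)
    (hS2 : ∀ u ∈ Icc (0:ℝ) R, ∀ w ∈ Icc (0:ℝ) R,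
      deriv (fun w' => S u w') w ∈ Icc (-𝒮) (-c))
    (hS00 : S 0 0 = 0) (hSRR : S R R = 0)
    (hdiag : ∀ κ ∈ Icc (0:ℝ) R, S κ κ = 0)
    (Tmax : ℝ) (hT : 0 < Tmax)
    (ρ₁ ρ₂ : ℝ → ℝ)
    (hbox : ∀ t ∈ Icc (0:ℝ) Tmax, ρ₁ t ∈ Icc (0:ℝ) R ∧ ρ₂ t ∈ Icc (0:ℝ) R)
    (hode₁ : ∀ t ∈ Icc (0:ℝ) Tmax,
      HasDerivAt ρ₁ (-(1 / τ) * S (ρ₁ t) (ρ₂ t)) t)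
    (hode₂ : ∀ t ∈ Icc (0:ℝ) Tmax,
      HasDerivAt ρ₂ ((1 / τ) * S (ρ₁ t) (ρ₂ t)) t) :
    (∀ t ∈ Icc (0:ℝ) Tmax, ρ₁ t + ρ₂ t = ρ₁ 0 + ρ₂ 0) ∧
    (∀ t ∈ Icc (0:ℝ) Tmax,
      |ρ₁ t - ρ₂ t| ≤ Real.exp (-2 * c * t / τ) * |ρ₁ 0 - ρ₂ 0|) ∧
    (∀ t ∈ Icc (0:ℝ) Tmax,
      |ρ₁ t - (ρ₁ 0 + ρ₂ 0) / 2| ≤ (1 / 2) * Real.exp (-2 * c * t / τ) * |ρ₁ 0 - ρ₂ 0| ∧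
      |ρ₂ t - (ρ₁ 0 + ρ₂ 0) / 2| ≤ (1 / 2) * Real.exp (-2 * c * t / τ) * |ρ₁ 0 - ρ₂ 0|) :=
  two_lane_ode_exponential_equilibration_general R c 𝒮 τ hc hτ S hS1 hdiag Tmax ρ₁ ρ₂ hbox hode₁
    hode₂
end

section
/- Under the stated assumptions (with Δt playing no role here), let T > 0 and let ρ : [0,T] → ∏_{j=1}^M [0,R_j] be a differentiable curve solving the lane-exchange ODE system ρ_j′(t) = (1/τ)·g_j(ρ(t)) for all j = 1,…,M and t ∈ [0,T]. Then the total source strength t ↦ ∑_{j=1}^M |g_j(ρ(t))| is nonincreasing on [0,T]: for all 0 ≤ s ≤ t ≤ T, ∑_{j=1}^M |g_j(ρ(t))| ≤ ∑_{j=1}^M |g_j(ρ(s))|. (Continuous-time analogue of the telescoping source estimate of Lemma 2.5, underlying the relaxation analysis of Theorem 3.4.) -/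
/-!
Put `q j t = g_j(ρ(t))` and `F k t = S_k(ρ_k(t), ρ_{k+1}(t))`. Then `q j = F (j-1) - F j` with
`F 0 = F M = 0`, and by the chain rule `F k' = a k * q k + b k * q (k+1)` with `a k ≥ 0 ≥ b k`.
Choose signs `ε j` with `|ε j| ≤ 1` and `ε j * q j = |q j|` that realise the right derivative
`ε j * q j'` of `|q j|`. Summation by parts writes the right derivative of `∑ |q j|` as
`∑ (ε (k+1) - ε k) * (a k * q k + b k * q (k+1))`, and each term is `≤ 0` since
`ε (k+1) * q k ≤ |q k| = ε k * q k` and `ε k * q (k+1) ≤ |q (k+1)| = ε (k+1) * q (k+1)`.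
A continuous function with nonpositive right derivatives is antitone.
-/

open Set

theorem DifferentiableAt.hasDerivAt_uncurry_comp_s13 {f : ℝ → ℝ → ℝ} {u v : ℝ → ℝ} {u' v' x : ℝ}
    (hf : DifferentiableAt ℝ (Function.uncurry f) (u x, v x))
    (hu : HasDerivAt u u' x) (hv : HasDerivAt v v' x) :
    HasDerivAt (fun t => f (u t) (v t))
      (deriv (fun a => f a (v x)) (u x) * u' + deriv (fun b => f (u x) b) (v x) * v') x := by
  set L := fderiv ℝ (Function.uncurry f) (u x, v x)
  have hL : HasFDerivAt (Function.uncurry f) L (u x, v x) := hf.hasFDerivAt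
  have h₁ : HasDerivAt (fun a => f a (v x)) (L (1, 0)) (u x) := by
    exact hL.comp_hasDerivAt (u x) ((hasDerivAt_id (u x)).prodMk (hasDerivAt_const (u x) (v x)))
  have h₂ : HasDerivAt (fun b => f (u x) b) (L (0, 1)) (v x) := by
    exact hL.comp_hasDerivAt (v x) ((hasDerivAt_const (v x) (u x)).prodMk (hasDerivAt_id (v x)))
  have hLuv : L (u', v') = L (1, 0) * u' + L (0, 1) * v' := by
    rw [show ((u', v') : ℝ × ℝ) = u' • ((1 : ℝ), (0 : ℝ)) + v' • ((0 : ℝ), (1 : ℝ)) by simp,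
      map_add, map_smul, map_smul, smul_eq_mul, smul_eq_mul, mul_comm u', mul_comm v']
  rw [h₁.deriv, h₂.deriv, ← hLuv]
  exact hL.comp_hasDerivAt x (hu.prodMk hv)

/-- `|f|` need not be differentiable at a zero of `f`, but its right derivative there is
`|f'| = sign f' * f'`. -/
theorem HasDerivAt.exists_hasDerivWithinAt_Ici_abs {f : ℝ → ℝ} {f' x : ℝ}
    (hf : HasDerivAt f f' x) :
    ∃ ε : ℝ, |ε| ≤ 1 ∧ ε * f x = |f x| ∧
      HasDerivWithinAt (fun y => |f y|) (ε * f') (Ici x) x := by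
  have abs_sign_le_one (y : ℝ) : |(SignType.sign y : ℝ)| ≤ 1 := by
    rcases lt_trichotomy y 0 with h | h | h <;> simp [h]
  by_cases hx : f x = 0
  · refine ⟨SignType.sign f', abs_sign_le_one _, by simp [hx], ?_⟩
    rw [sign_mul_self, ← hasDerivWithinAt_Ioi_iff_Ici,
      hasDerivWithinAt_iff_tendsto_slope' self_notMem_Ioi]
    have hslope := (hasDerivWithinAt_iff_tendsto_slope' self_notMem_Ioi).mp
      (hf.hasDerivWithinAt (s := Ioi x))
    refine hslope.abs.congr' (eventually_nhdsWithin_of_forall fun y (hy : x < y) => ?_)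
    simp [slope_def_field, hx, abs_div, abs_of_pos (sub_pos.mpr hy)]
  · refine ⟨SignType.sign (f x), abs_sign_le_one _, sign_mul_self _, ?_⟩
    exact ((hasDerivAt_abs hx).comp x hf).hasDerivWithinAt

theorem antitoneOn_Icc_of_deriv_right_nonpos {f : ℝ → ℝ} {a b : ℝ}
    (hf : ContinuousOn f (Icc a b))
    (hf' : ∀ x ∈ Ico a b, ∃ D ≤ 0, HasDerivWithinAt f D (Ici x) x) :
    AntitoneOn f (Icc a b) := by
  intro x hx y hy hxy
  refine image_le_of_liminf_slope_right_le_deriv_boundary (hf.mono (Icc_subset_Icc hx.1 hy.2))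
    (B := fun _ => f x) (B' := 0) le_rfl continuousOn_const
    (fun _ _ => hasDerivWithinAt_const _ _ _) (fun z hz r hr => ?_) ⟨hxy, le_rfl⟩
  obtain ⟨D, hD, hfD⟩ := hf' z ⟨hx.1.trans hz.1, hz.2.trans_le hy.2⟩
  exact hfD.liminf_right_slope_le (hD.trans_lt hr)

theorem sum_Icc_mul_sub_by_parts (ε A : ℕ → ℝ) (n : ℕ) :
    ∑ j ∈ Finset.Icc 1 (n + 1), ε j * (A (j - 1) - A j) =
      ε 1 * A 0 - ε (n + 1) * A (n + 1) + ∑ k ∈ Finset.Icc 1 n, (ε (k + 1) - ε k) * A k := by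
  induction n with
  | zero => simp [mul_sub]
  | succ n ih =>
    rw [Finset.sum_Icc_succ_top (by omega), ih, Finset.sum_Icc_succ_top (by omega)]
    simp only [Nat.add_sub_cancel]
    ring

theorem sum_Icc_mul_sub_nonpos {ε A : ℕ → ℝ} {N : ℕ} (hA₀ : A 0 = 0) (hA_N : A N = 0)
    (h : ∀ k ∈ Finset.Icc 1 (N - 1), (ε (k + 1) - ε k) * A k ≤ 0) :
    ∑ j ∈ Finset.Icc 1 N, ε j * (A (j - 1) - A j) ≤ 0 := by
  cases N with
  | zero => simp
  | succ n =>
    rw [sum_Icc_mul_sub_by_parts, hA₀, hA_N]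
    simpa using Finset.sum_nonpos h

theorem sub_mul_add_mul_nonpos {ε₀ ε₁ a b p q : ℝ} (ha : 0 ≤ a) (hb : b ≤ 0)
    (hε₀ : |ε₀| ≤ 1) (hε₁ : |ε₁| ≤ 1) (hp : ε₀ * p = |p|) (hq : ε₁ * q = |q|) :
    (ε₁ - ε₀) * (a * p + b * q) ≤ 0 := by
  have mul_le_abs {ε y : ℝ} (hε : |ε| ≤ 1) : ε * y ≤ |y| :=
    (le_abs_self _).trans (by rw [abs_mul]; exact mul_le_of_le_one_left (abs_nonneg _) hε)
  nlinarith [mul_le_abs (y := p) hε₁, mul_le_abs (y := q) hε₀]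

section ExchangeChain

variable {N : ℕ} {q F : ℕ → ℝ → ℝ} {x : ℝ}

theorem hasDerivAt_of_eq_flux_sub (hq : ∀ j ∈ Finset.Icc 1 N, q j = F (j - 1) - F j)
    (hF₀ : F 0 = 0) (hF_N : F N = 0)
    (hF : ∀ k ∈ Finset.Icc 1 (N - 1), DifferentiableAt ℝ (F k) x) :
    ∀ j ∈ Finset.Icc 1 N, HasDerivAt (q j) (deriv (F (j - 1)) x - deriv (F j) x) x := by
  have hdiff : ∀ k ≤ N, DifferentiableAt ℝ (F k) x := by
    intro k hk
    rcases Nat.eq_zero_or_pos k with rfl | hk₀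
    · exact hF₀ ▸ differentiableAt_const 0
    rcases hk.eq_or_lt with rfl | hkN
    · exact hF_N ▸ differentiableAt_const 0
    exact hF k (Finset.mem_Icc.mpr ⟨hk₀, by omega⟩)
  intro j hj
  obtain ⟨hj₁, hjN⟩ := Finset.mem_Icc.mp hj
  exact hq j hj ▸ (hdiff (j - 1) (by omega)).hasDerivAt.sub (hdiff j hjN).hasDerivAt

theorem exists_deriv_right_sum_abs_nonpos {a b : ℕ → ℝ}
    (hq : ∀ j ∈ Finset.Icc 1 N, q j = F (j - 1) - F j) (hF₀ : F 0 = 0) (hF_N : F N = 0)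
    (hF : ∀ k ∈ Finset.Icc 1 (N - 1), HasDerivAt (F k) (a k * q k x + b k * q (k + 1) x) x)
    (ha : ∀ k ∈ Finset.Icc 1 (N - 1), 0 ≤ a k) (hb : ∀ k ∈ Finset.Icc 1 (N - 1), b k ≤ 0) :
    ∃ D ≤ 0, HasDerivWithinAt (fun y => ∑ j ∈ Finset.Icc 1 N, |q j y|) D (Ici x) x := by
  have hq' := hasDerivAt_of_eq_flux_sub hq hF₀ hF_N fun k hk => (hF k hk).differentiableAt
  choose! ε hε₁ hεq hε using fun j hj => (hq' j hj).exists_hasDerivWithinAt_Ici_abs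
  refine ⟨_, ?_, HasDerivWithinAt.fun_sum hε⟩
  refine sum_Icc_mul_sub_nonpos (A := fun k => deriv (F k) x) (by simp [hF₀]) (by simp [hF_N])
    fun k hk => ?_
  obtain ⟨hk₁, hkN⟩ := Finset.mem_Icc.mp hk
  have hk' : k ∈ Finset.Icc 1 N := Finset.mem_Icc.mpr ⟨hk₁, by omega⟩
  have hk'' : k + 1 ∈ Finset.Icc 1 N := Finset.mem_Icc.mpr ⟨by omega, by omega⟩
  rw [(hF k hk).deriv]
  exact sub_mul_add_mul_nonpos (ha k hk) (hb k hk) (hε₁ k hk') (hε₁ (k + 1) hk'')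
    (hεq k hk') (hεq (k + 1) hk'')

end ExchangeChain

theorem ode_source_strength_nonincreasing_general
    (M : ℕ)
    (R : ℕ → ℝ)
    (𝒮 τ : ℝ) (hτ : 0 < τ)
    (S : ℕ → ℝ → ℝ → ℝ)
    (hS0 : ∀ u w, S 0 u w = 0)
    (hSM : ∀ u w, S M u w = 0)
    (hSC1 : ∀ j, 1 ≤ j → j ≤ M - 1 → ContDiff ℝ 1 (Function.uncurry (S j)))
    (hS1 : ∀ j, 1 ≤ j → j ≤ M - 1 → ∀ u ∈ Icc (0:ℝ) (R j), ∀ w ∈ Icc (0:ℝ) (R (j+1)),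
      deriv (fun u' => S j u' w) u ∈ Icc (0:ℝ) 𝒮)
    (hS2 : ∀ j, 1 ≤ j → j ≤ M - 1 → ∀ u ∈ Icc (0:ℝ) (R j), ∀ w ∈ Icc (0:ℝ) (R (j+1)),
      deriv (fun w' => S j u w') w ∈ Icc (-𝒮) (0:ℝ))
    (g : (ℕ → ℝ) → ℕ → ℝ)
    (hg : ∀ ρ j, g ρ j = S (j-1) (ρ (j-1)) (ρ j) - S j (ρ j) (ρ (j+1)))
    (Tmax : ℝ)
    (ρ : ℝ → ℕ → ℝ)
    (hbox : ∀ t ∈ Icc (0:ℝ) Tmax, ∀ j, 1 ≤ j → j ≤ M → ρ t j ∈ Icc (0:ℝ) (R j))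
    (hode : ∀ t ∈ Icc (0:ℝ) Tmax, ∀ j, 1 ≤ j → j ≤ M →
      HasDerivAt (fun s => ρ s j) ((1 / τ) * g (ρ t) j) t) :
    ∀ s ∈ Icc (0:ℝ) Tmax, ∀ t ∈ Icc (0:ℝ) Tmax, s ≤ t →
      ∑ j ∈ Finset.Icc 1 M, |g (ρ t) j| ≤ ∑ j ∈ Finset.Icc 1 M, |g (ρ s) j| := by
  set q : ℕ → ℝ → ℝ := fun j t => g (ρ t) j
  set F : ℕ → ℝ → ℝ := fun k t => S k (ρ t k) (ρ t (k + 1))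
  have hq : ∀ j ∈ Finset.Icc 1 M, q j = F (j - 1) - F j := fun j hj => funext fun t => by
    simp [q, F, hg, Nat.sub_add_cancel (Finset.mem_Icc.mp hj).1]
  have hF₀ : F 0 = 0 := funext fun t => hS0 _ _
  have hF_M : F M = 0 := funext fun t => hSM _ _
  have hF : ∀ x ∈ Icc 0 Tmax, ∀ k ∈ Finset.Icc 1 (M - 1), HasDerivAt (F k)
      (1 / τ * deriv (fun u => S k u (ρ x (k + 1))) (ρ x k) * q k x +
        1 / τ * deriv (fun w => S k (ρ x k) w) (ρ x (k + 1)) * q (k + 1) x) x := by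
    intro x hx k hk
    obtain ⟨hk₁, hkM⟩ := Finset.mem_Icc.mp hk
    convert ((hSC1 k hk₁ hkM).differentiable one_ne_zero _).hasDerivAt_uncurry_comp_s13
      (hode x hx k hk₁ (by omega)) (hode x hx (k + 1) (by omega) (by omega)) using 1
    ring
  refine antitoneOn_Icc_of_deriv_right_nonpos
    (continuousOn_finsetSum _ fun j hj x hx => ?_) fun x hx => ?_
  · exact (hasDerivAt_of_eq_flux_sub hq hF₀ hF_M
      (fun k hk => (hF x hx k hk).differentiableAt) j hj).continuousAt.abs.continuousWithinAt
  · have hx' := Ico_subset_Icc_self hx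
    refine exists_deriv_right_sum_abs_nonpos hq hF₀ hF_M (hF x hx') (fun k hk => ?_) fun k hk => ?_
    all_goals
      obtain ⟨hk₁, hkM⟩ := Finset.mem_Icc.mp hk
      have hu := hbox x hx' k hk₁ (by omega)
      have hw := hbox x hx' (k + 1) (by omega) (by omega)
    · exact mul_nonneg (by positivity) (hS1 k hk₁ hkM _ hu _ hw).1
    · exact mul_nonpos_of_nonneg_of_nonpos (by positivity) (hS2 k hk₁ hkM _ hu _ hw).2

/-- Continuous-time analogue of the telescoping source estimate of Lemma 2.5:
along the lane-exchange relaxation ODE, the total source strength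
t ↦ ∑_j |g_j(ρ(t))| is nonincreasing. -/
theorem ode_source_strength_nonincreasing
    (M : ℕ) (hM : 1 ≤ M)
    (R : ℕ → ℝ) (hR : ∀ j, 1 ≤ j → j ≤ M → 0 < R j)
    (𝒮 τ : ℝ) (h𝒮 : 0 < 𝒮) (hτ : 0 < τ)
    (S : ℕ → ℝ → ℝ → ℝ)
    (hS0 : ∀ u w, S 0 u w = 0)
    (hSM : ∀ u w, S M u w = 0)
    (hSC1 : ∀ j, 1 ≤ j → j ≤ M - 1 → ContDiff ℝ 1 (Function.uncurry (S j)))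
    (hS1 : ∀ j, 1 ≤ j → j ≤ M - 1 → ∀ u ∈ Icc (0:ℝ) (R j), ∀ w ∈ Icc (0:ℝ) (R (j+1)),
      deriv (fun u' => S j u' w) u ∈ Icc (0:ℝ) 𝒮)
    (hS2 : ∀ j, 1 ≤ j → j ≤ M - 1 → ∀ u ∈ Icc (0:ℝ) (R j), ∀ w ∈ Icc (0:ℝ) (R (j+1)),
      deriv (fun w' => S j u w') w ∈ Icc (-𝒮) (0:ℝ))
    (hS00 : ∀ j, 1 ≤ j → j ≤ M - 1 → S j 0 0 = 0)
    (hSRR : ∀ j, 1 ≤ j → j ≤ M - 1 → S j (R j) (R (j+1)) = 0)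
    (g : (ℕ → ℝ) → ℕ → ℝ)
    (hg : ∀ ρ j, g ρ j = S (j-1) (ρ (j-1)) (ρ j) - S j (ρ j) (ρ (j+1)))
    (Tmax : ℝ) (hT : 0 < Tmax)
    (ρ : ℝ → ℕ → ℝ)
    (hbox : ∀ t ∈ Icc (0:ℝ) Tmax, ∀ j, 1 ≤ j → j ≤ M → ρ t j ∈ Icc (0:ℝ) (R j))
    (hode : ∀ t ∈ Icc (0:ℝ) Tmax, ∀ j, 1 ≤ j → j ≤ M →
      HasDerivAt (fun s => ρ s j) ((1 / τ) * g (ρ t) j) t) :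
    ∀ s ∈ Icc (0:ℝ) Tmax, ∀ t ∈ Icc (0:ℝ) Tmax, s ≤ t →
      ∑ j ∈ Finset.Icc 1 M, |g (ρ t) j| ≤ ∑ j ∈ Finset.Icc 1 M, |g (ρ s) j| :=
  ode_source_strength_nonincreasing_general M R 𝒮 τ hτ S hS0 hSM hSC1 hS1 hS2 g hg Tmax ρ hbox hode
end

section
/- Fix V₁, V₂ > 0 and R₁, R₂ > 0, let v₁(ρ) = V₁·(1 − ρ/R₁) and v₂(ρ) = V₂·(1 − ρ/R₂), and define the lane-change source S(ρ₁,ρ₂) = (v₂(ρ₂) − v₁(ρ₁))⁺·ρ₁ − (v₂(ρ₂) − v₁(ρ₁))⁻·ρ₂, where x⁺ = max(x,0) and x⁻ = max(−x,0). Then S satisfies the structural assumptions (S0) of the multi-lane model on the box [0,R₁]×[0,R₂]: S is Lipschitz continuous on [0,R₁]×[0,R₂], S(0,0) = 0, S(R₁,R₂) = 0, S is nondecreasing in its first argument on [0,R₁]×[0,R₂], and S is nonincreasing in its second argument on [0,R₁]×[0,R₂]. -/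
open Set

/-- Bound for the difference of products appearing in the source term. -/
lemma prod_abs_bound (a a' x x' X M : ℝ) (hx0 : 0 ≤ x) (hxX : x ≤ X)
    (ha'0 : 0 ≤ a') (ha'M : a' ≤ M) :
    |a * x - a' * x'| ≤ |a - a'| * X + M * |x - x'| := by
  have h : a * x - a' * x' = (a - a') * x + a' * (x - x') := by ring
  rw [h]
  calc |(a - a') * x + a' * (x - x')| ≤ |(a - a') * x| + |a' * (x - x')| := abs_add_le _ _
    _ = |a - a'| * x + a' * |x - x'| := by
        rw [abs_mul, abs_mul, abs_of_nonneg hx0, abs_of_nonneg ha'0]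
    _ ≤ |a - a'| * X + M * |x - x'| := by
        have h1 : 0 ≤ |a - a'| := abs_nonneg _
        have h2 : 0 ≤ |x - x'| := abs_nonneg _
        gcongr

/-- The speed-difference lane-change source term of the numerical section
satisfies the structural assumptions (S0) of the multi-lane model. -/
theorem speed_difference_source_satisfies_S0
    (V₁ V₂ R₁ R₂ : ℝ) (hV₁ : 0 < V₁) (hV₂ : 0 < V₂) (hR₁ : 0 < R₁) (hR₂ : 0 < R₂)
    (v₁ v₂ : ℝ → ℝ)
    (hv₁ : ∀ ρ, v₁ ρ = V₁ * (1 - ρ / R₁))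
    (hv₂ : ∀ ρ, v₂ ρ = V₂ * (1 - ρ / R₂))
    (S : ℝ → ℝ → ℝ)
    (hS : ∀ ρ₁ ρ₂, S ρ₁ ρ₂ =
      max (v₂ ρ₂ - v₁ ρ₁) 0 * ρ₁ - max (-(v₂ ρ₂ - v₁ ρ₁)) 0 * ρ₂) :
    (∃ K : NNReal, LipschitzOnWith K (Function.uncurry S)
      (Icc (0:ℝ) R₁ ×ˢ Icc (0:ℝ) R₂)) ∧
    S 0 0 = 0 ∧ S R₁ R₂ = 0 ∧
    (∀ w ∈ Icc (0:ℝ) R₂, ∀ u ∈ Icc (0:ℝ) R₁, ∀ u' ∈ Icc (0:ℝ) R₁,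
      u ≤ u' → S u w ≤ S u' w) ∧
    (∀ u ∈ Icc (0:ℝ) R₁, ∀ w ∈ Icc (0:ℝ) R₂, ∀ w' ∈ Icc (0:ℝ) R₂,
      w ≤ w' → S u w' ≤ S u w) := by
  refine ⟨?_, ?_, ?_, ?_, ?_⟩
  · -- Lipschitz
    have hk0 : (0:ℝ) ≤ (R₁ + R₂) * (V₁ / R₁ + V₂ / R₂) + (V₁ + V₂) := by positivity
    refine ⟨Real.toNNReal ((R₁ + R₂) * (V₁ / R₁ + V₂ / R₂) + (V₁ + V₂)), ?_⟩
    rw [lipschitzOnWith_iff_dist_le_mul]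
    rintro ⟨u, w⟩ ⟨hu, hw⟩ ⟨u', w'⟩ ⟨hu', hw'⟩
    simp only [Function.uncurry]
    rw [hS, hS, Real.dist_eq, Real.coe_toNNReal _ hk0]
    set d := dist ((u, w) : ℝ × ℝ) (u', w') with hd
    have hd0 : 0 ≤ d := dist_nonneg
    have hdu : |u - u'| ≤ d := by
      rw [hd, Prod.dist_eq]
      simp only [Real.dist_eq]
      exact le_max_left _ _
    have hdw : |w - w'| ≤ d := by
      rw [hd, Prod.dist_eq]
      simp only [Real.dist_eq]
      exact le_max_right _ _
    set A := v₂ w - v₁ u with hA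
    set A' := v₂ w' - v₁ u' with hA'
    have hAA' : |A - A'| ≤ V₁ / R₁ * |u - u'| + V₂ / R₂ * |w - w'| := by
      have heq : A - A' = V₁ / R₁ * (u - u') - V₂ / R₂ * (w - w') := by
        rw [hA, hA', hv₁, hv₁, hv₂, hv₂]; field_simp; ring
      rw [heq]
      calc |V₁ / R₁ * (u - u') - V₂ / R₂ * (w - w')|
          ≤ |V₁ / R₁ * (u - u')| + |V₂ / R₂ * (w - w')| := abs_sub _ _
        _ = V₁ / R₁ * |u - u'| + V₂ / R₂ * |w - w'| := by
            rw [abs_mul, abs_mul, abs_of_pos (div_pos hV₁ hR₁), abs_of_pos (div_pos hV₂ hR₂)]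
    have hP : |max A 0 - max A' 0| ≤ |A - A'| := abs_max_sub_max_le_abs _ _ _
    have hN : |max (-A) 0 - max (-A') 0| ≤ |A - A'| := by
      have := abs_max_sub_max_le_abs (-A) (-A') 0
      rwa [neg_sub_neg, abs_sub_comm A' A] at this
    have hP'0 : (0:ℝ) ≤ max A' 0 := le_max_right _ _
    have hN'0 : (0:ℝ) ≤ max (-A') 0 := le_max_right _ _
    have hA'le : A' ≤ V₂ := by
      rw [hA', hv₁, hv₂]
      have h1 : V₂ * (1 - w' / R₂) ≤ V₂ := by
        have : 0 ≤ w' / R₂ := div_nonneg hw'.1 hR₂.le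
        nlinarith
      have h2 : 0 ≤ V₁ * (1 - u' / R₁) := by
        have : u' / R₁ ≤ 1 := (div_le_one hR₁).mpr hu'.2
        nlinarith
      linarith
    have hnA'le : -A' ≤ V₁ := by
      rw [hA', hv₁, hv₂]
      have h1 : V₁ * (1 - u' / R₁) ≤ V₁ := by
        have : 0 ≤ u' / R₁ := div_nonneg hu'.1 hR₁.le
        nlinarith
      have h2 : 0 ≤ V₂ * (1 - w' / R₂) := by
        have : w' / R₂ ≤ 1 := (div_le_one hR₂).mpr hw'.2
        nlinarith
      linarith
    have hP'M : max A' 0 ≤ V₂ := max_le hA'le hV₂.le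
    have hN'M : max (-A') 0 ≤ V₁ := max_le hnA'le hV₁.le
    have hb1 : |max A 0 * u - max A' 0 * u'| ≤
        |max A 0 - max A' 0| * R₁ + V₂ * |u - u'| :=
      prod_abs_bound _ _ _ _ _ _ hu.1 hu.2 hP'0 hP'M
    have hb2 : |max (-A) 0 * w - max (-A') 0 * w'| ≤
        |max (-A) 0 - max (-A') 0| * R₂ + V₁ * |w - w'| :=
      prod_abs_bound _ _ _ _ _ _ hw.1 hw.2 hN'0 hN'M
    have hsplit : |max A 0 * u - max (-A) 0 * w - (max A' 0 * u' - max (-A') 0 * w')| ≤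
        |max A 0 * u - max A' 0 * u'| + |max (-A) 0 * w - max (-A') 0 * w'| := by
      have h : max A 0 * u - max (-A) 0 * w - (max A' 0 * u' - max (-A') 0 * w') =
          (max A 0 * u - max A' 0 * u') - (max (-A) 0 * w - max (-A') 0 * w') := by ring
      rw [h]; exact abs_sub _ _
    have hm1 : |max A 0 - max A' 0| * R₁ ≤ |A - A'| * R₁ :=
      mul_le_mul_of_nonneg_right hP hR₁.le
    have hm2 : |max (-A) 0 - max (-A') 0| * R₂ ≤ |A - A'| * R₂ :=
      mul_le_mul_of_nonneg_right hN hR₂.le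
    have hAAd : |A - A'| ≤ (V₁ / R₁ + V₂ / R₂) * d := by
      have h1 : V₁ / R₁ * |u - u'| ≤ V₁ / R₁ * d :=
        mul_le_mul_of_nonneg_left hdu (by positivity)
      have h2 : V₂ / R₂ * |w - w'| ≤ V₂ / R₂ * d :=
        mul_le_mul_of_nonneg_left hdw (by positivity)
      nlinarith
    have hfin1 : |A - A'| * R₁ ≤ (V₁ / R₁ + V₂ / R₂) * d * R₁ :=
      mul_le_mul_of_nonneg_right hAAd hR₁.le
    have hfin2 : |A - A'| * R₂ ≤ (V₁ / R₁ + V₂ / R₂) * d * R₂ :=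
      mul_le_mul_of_nonneg_right hAAd hR₂.le
    have hfin3 : V₂ * |u - u'| ≤ V₂ * d := mul_le_mul_of_nonneg_left hdu hV₂.le
    have hfin4 : V₁ * |w - w'| ≤ V₁ * d := mul_le_mul_of_nonneg_left hdw hV₁.le
    have hkd : ((R₁ + R₂) * (V₁ / R₁ + V₂ / R₂) + (V₁ + V₂)) * d =
        (V₁ / R₁ + V₂ / R₂) * d * R₁ + (V₁ / R₁ + V₂ / R₂) * d * R₂
        + V₂ * d + V₁ * d := by ring
    linarith
  · simp [hS]
  · have h1 : v₁ R₁ = 0 := by rw [hv₁, div_self hR₁.ne']; ring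
    have h2 : v₂ R₂ = 0 := by rw [hv₂, div_self hR₂.ne']; ring
    simp [hS, h1, h2]
  · rintro w ⟨hw0, hw2⟩ u ⟨hu0, hu1⟩ u' ⟨hu'0, hu'1⟩ huu'
    have hA : v₂ w - v₁ u ≤ v₂ w - v₁ u' := by
      rw [hv₁, hv₁]
      have hdiv : u / R₁ ≤ u' / R₁ := by gcongr
      nlinarith [mul_le_mul_of_nonneg_left hdiv hV₁.le]
    rw [hS, hS]
    have h1 : max (v₂ w - v₁ u) 0 * u ≤ max (v₂ w - v₁ u') 0 * u' :=
      mul_le_mul (max_le_max hA le_rfl) huu' hu0 (le_max_right _ _)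
    have h2 : max (-(v₂ w - v₁ u')) 0 * w ≤ max (-(v₂ w - v₁ u)) 0 * w :=
      mul_le_mul_of_nonneg_right (max_le_max (neg_le_neg hA) le_rfl) hw0
    linarith
  · rintro u ⟨hu0, hu1⟩ w ⟨hw0, hw2⟩ w' ⟨hw'0, hw'2⟩ hww'
    have hA : v₂ w' - v₁ u ≤ v₂ w - v₁ u := by
      rw [hv₂, hv₂]
      have hdiv : w / R₂ ≤ w' / R₂ := by gcongr
      nlinarith [mul_le_mul_of_nonneg_left hdiv hV₂.le]
    rw [hS, hS]
    have h1 : max (v₂ w' - v₁ u) 0 * u ≤ max (v₂ w - v₁ u) 0 * u :=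
      mul_le_mul_of_nonneg_right (max_le_max hA le_rfl) hu0
    have h2 : max (-(v₂ w - v₁ u)) 0 * w ≤ max (-(v₂ w' - v₁ u)) 0 * w' :=
      mul_le_mul (max_le_max (neg_le_neg hA) le_rfl) hww' hw0 (le_max_right _ _)
    linarith
end
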